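/- For q₁ in (0, π²/4 − 1] and q₂ in (0, 2/(π−2)], and all x in (0, π/2], it holds that 2/π + (2/(q₁·π^{q₁+1}))(π^{q₁} − (2x)^{q₁}) ≥ sin(x)/x ≥ 2/π + ((π − 2)/π^{q₂+1})(π^{q₂} − (2x)^{q₂}). -/

import Mathlib

open Real Set

/-- positivity from derivative -/
lemma nonneg_of_deriv {f f' : ℝ → ℝ} (hf : ∀ x, HasDerivAt f (f' x) x) (h0 : f 0 = 0)
    (h' : ∀ x, 0 ≤ x → 0 ≤ f' x) {x : ℝ} (hx : 0 ≤ x) : 0 ≤ f x := by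
  have hm : MonotoneOn f (Ici (0:ℝ)) := by
    apply monotoneOn_of_hasDerivWithinAt_nonneg (convex_Ici 0)
      (fun y _ => (hf y).continuousAt.continuousWithinAt)
      (fun y _ => (hf y).hasDerivWithinAt)
    intro y hy
    rw [interior_Ici] at hy
    exact h' y (le_of_lt hy)
  calc (0:ℝ) = f 0 := h0.symm
  _ ≤ f x := hm (by simp) (by simpa using hx) hx

lemma cos_ge_quad {x : ℝ} (hx : 0 ≤ x) : 1 - x^2/2 ≤ Real.cos x := by
  have h := nonneg_of_deriv (f := fun y => Real.cos y - (1 - y^2/2))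
    (f' := fun y => y - Real.sin y) (fun y => by
      have h1 : HasDerivAt (fun y : ℝ => 1 - y^2/2) (-y) y := by
        simpa using (((hasDerivAt_pow 2 y)).div_const 2).const_sub 1
      exact ((Real.hasDerivAt_cos y).sub h1).congr_deriv (by ring))
    (by norm_num) (fun y hy => by simpa using Real.sin_le hy) hx
  linarith [h]

lemma sin_ge_cubic {x : ℝ} (hx : 0 ≤ x) : x - x^3/6 ≤ Real.sin x := by
  have h := nonneg_of_deriv (f := fun y => Real.sin y - (y - y^3/6))
    (f' := fun y => Real.cos y - (1 - y^2/2)) (fun y => by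
      have h1 : HasDerivAt (fun y : ℝ => y - y^3/6) (1 - y^2/2) y := by
        have := ((hasDerivAt_pow 3 y).div_const 6)
        have h2 := (hasDerivAt_id y).sub this
        exact h2.congr_deriv (by push_cast; ring)
      exact (Real.hasDerivAt_sin y).sub h1)
    (by norm_num) (fun y hy => by linarith [cos_ge_quad hy]) hx
  linarith [h]

lemma cos_le_quart {x : ℝ} (hx : 0 ≤ x) : Real.cos x ≤ 1 - x^2/2 + x^4/24 := by
  have h := nonneg_of_deriv (f := fun y => (1 - y^2/2 + y^4/24) - Real.cos y)
    (f' := fun y => Real.sin y - (y - y^3/6)) (fun y => by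
      have h1 : HasDerivAt (fun y : ℝ => 1 - y^2/2 + y^4/24) (-(y - y^3/6)) y := by
        have h2 := (((hasDerivAt_pow 2 y)).div_const 2).const_sub 1
        have h3 := h2.add ((hasDerivAt_pow 4 y).div_const 24)
        exact h3.congr_deriv (by push_cast; ring)
      have := h1.sub (Real.hasDerivAt_cos y)
      exact this.congr_deriv (by ring))
    (by norm_num) (fun y hy => by linarith [sin_ge_cubic hy]) hx
  linarith [h]

lemma sin_le_quint {x : ℝ} (hx : 0 ≤ x) : Real.sin x ≤ x - x^3/6 + x^5/120 := by
  have h := nonneg_of_deriv (f := fun y => (y - y^3/6 + y^5/120) - Real.sin y)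
    (f' := fun y => (1 - y^2/2 + y^4/24) - Real.cos y) (fun y => by
      have h1 : HasDerivAt (fun y : ℝ => y - y^3/6 + y^5/120) (1 - y^2/2 + y^4/24) y := by
        have h2 := ((hasDerivAt_id y).sub ((hasDerivAt_pow 3 y).div_const 6)).add
          ((hasDerivAt_pow 5 y).div_const 120)
        exact h2.congr_deriv (by push_cast; ring)
      exact h1.sub (Real.hasDerivAt_sin y))
    (by norm_num) (fun y hy => by linarith [cos_le_quart hy]) hx
  linarith [h]

lemma cos_ge_sext {x : ℝ} (hx : 0 ≤ x) : 1 - x^2/2 + x^4/24 - x^6/720 ≤ Real.cos x := by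
  have h := nonneg_of_deriv (f := fun y => Real.cos y - (1 - y^2/2 + y^4/24 - y^6/720))
    (f' := fun y => (y - y^3/6 + y^5/120) - Real.sin y) (fun y => by
      have h1 : HasDerivAt (fun y : ℝ => 1 - y^2/2 + y^4/24 - y^6/720)
          (-(y - y^3/6 + y^5/120)) y := by
        have h2 := ((((hasDerivAt_pow 2 y)).div_const 2).const_sub 1).add
          ((hasDerivAt_pow 4 y).div_const 24)
        have h3 := h2.sub ((hasDerivAt_pow 6 y).div_const 720)
        exact h3.congr_deriv (by push_cast; ring)
      have := (Real.hasDerivAt_cos y).sub h1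
      exact this.congr_deriv (by ring))
    (by norm_num) (fun y hy => by linarith [sin_le_quint hy]) hx
  linarith [h]

lemma sin_ge_sept {x : ℝ} (hx : 0 ≤ x) :
    x - x^3/6 + x^5/120 - x^7/5040 ≤ Real.sin x := by
  have h := nonneg_of_deriv (f := fun y => Real.sin y - (y - y^3/6 + y^5/120 - y^7/5040))
    (f' := fun y => Real.cos y - (1 - y^2/2 + y^4/24 - y^6/720)) (fun y => by
      have h1 : HasDerivAt (fun y : ℝ => y - y^3/6 + y^5/120 - y^7/5040)
          (1 - y^2/2 + y^4/24 - y^6/720) y := by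
        have h2 := (((hasDerivAt_id y).sub ((hasDerivAt_pow 3 y).div_const 6)).add
          ((hasDerivAt_pow 5 y).div_const 120)).sub ((hasDerivAt_pow 7 y).div_const 5040)
        exact h2.congr_deriv (by push_cast; ring)
      exact (Real.hasDerivAt_sin y).sub h1)
    (by norm_num) (fun y hy => by linarith [cos_ge_sext hy]) hx
  linarith [h]

/-- rpow with rational exponent, upper bound -/
lemma rpow_rat_le {t c : ℝ} (ht : 0 < t) (hc : 0 < c) (n d : ℕ) (hd : 0 < d)
    (h : t ^ n ≤ c ^ d) : t ^ ((n : ℝ)/d) ≤ c := by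
  have hdr : (0:ℝ) < d := by exact_mod_cast hd
  have h1 : t ^ ((n : ℝ)/d) = (t ^ (n:ℕ)) ^ ((1:ℝ)/d) := by
    rw [← Real.rpow_natCast t n, ← Real.rpow_mul ht.le]
    ring_nf
  rw [h1]
  calc ((t ^ n : ℝ)) ^ ((1:ℝ)/d) ≤ (c ^ d) ^ ((1:ℝ)/d) :=
        Real.rpow_le_rpow (by positivity) h (by positivity)
  _ = c := by
      rw [← Real.rpow_natCast c d, ← Real.rpow_mul hc.le]
      rw [mul_one_div, div_self (ne_of_gt hdr), Real.rpow_one]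

lemma le_rpow_rat {t c : ℝ} (ht : 0 < t) (hc : 0 < c) (n d : ℕ) (hd : 0 < d)
    (h : c ^ d ≤ t ^ n) : c ≤ t ^ ((n : ℝ)/d) := by
  have hdr : (0:ℝ) < d := by exact_mod_cast hd
  have h1 : t ^ ((n : ℝ)/d) = (t ^ (n:ℕ)) ^ ((1:ℝ)/d) := by
    rw [← Real.rpow_natCast t n, ← Real.rpow_mul ht.le]; ring_nf
  rw [h1]
  calc c = (c ^ d) ^ ((1:ℝ)/d) := by
        rw [← Real.rpow_natCast c d, ← Real.rpow_mul hc.le,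
          mul_one_div, div_self (ne_of_gt hdr), Real.rpow_one]
  _ ≤ (t ^ n) ^ ((1:ℝ)/d) := Real.rpow_le_rpow (by positivity) h (by positivity)

/-- lower bound for negative rational power: `c ≤ t ^ (-(n/d))` -/
lemma le_rpow_neg_rat {t c : ℝ} (ht : 0 < t) (hc : 0 < c) (n d : ℕ) (hd : 0 < d)
    (h : t ^ n * c ^ d ≤ 1) : c ≤ t ^ (-((n : ℝ)/d)) := by
  have hX : 0 < t ^ ((n:ℝ)/d) := Real.rpow_pos_of_pos ht _
  have h2 : t ^ ((n : ℝ)/d) ≤ 1/c := by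
    apply rpow_rat_le ht (by positivity) n d hd
    rw [div_pow, one_pow, le_div_iff₀ (by positivity)]
    linarith
  have h3 : 1/(1/c) ≤ 1/(t ^ ((n:ℝ)/d)) := one_div_le_one_div_of_le hX h2
  rw [one_div_one_div] at h3
  rw [Real.rpow_neg ht.le, ← one_div]
  exact h3

lemma rpow_neg_rat_le {t c : ℝ} (ht : 0 < t) (hc : 0 < c) (n d : ℕ) (hd : 0 < d)
    (h : 1 ≤ t ^ n * c ^ d) : t ^ (-((n : ℝ)/d)) ≤ c := by
  have hX : 0 < t ^ ((n:ℝ)/d) := Real.rpow_pos_of_pos ht _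
  have h2 : 1/c ≤ t ^ ((n : ℝ)/d) := by
    apply le_rpow_rat ht (by positivity) n d hd
    rw [div_pow, one_pow, div_le_iff₀ (by positivity)]
    linarith
  have h3 : 1/(t ^ ((n:ℝ)/d)) ≤ 1/(1/c) := one_div_le_one_div_of_le (by positivity) h2
  rw [one_div_one_div] at h3
  rw [Real.rpow_neg ht.le, ← one_div]
  exact h3

/-- antitone in base for negative exponent -/
lemma rpow_neg_base_anti {a b : ℝ} (ha : 0 < a) (hab : a ≤ b) {c : ℝ} (hc : 0 ≤ c) :
    b ^ (-c) ≤ a ^ (-c) := by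
  rw [Real.rpow_neg ha.le, Real.rpow_neg (ha.trans_le hab).le]
  have h1 : a ^ c ≤ b ^ c := Real.rpow_le_rpow ha.le hab hc
  have h2 : 0 < a ^ c := Real.rpow_pos_of_pos ha c
  exact inv_anti₀ h2 h1
noncomputable def KK : ℝ := 2/(π-2)
noncomputable def chi (t : ℝ) : ℝ := t ^ KK + Real.cos (π/2*t) - 1
noncomputable def chi' (t : ℝ) : ℝ := KK * t^(KK-1) - π/2 * Real.sin (π/2*t)
noncomputable def psi (t : ℝ) : ℝ := Real.sin (π/2*t) - π/2*t + (π-2)/2 * t ^ (KK+1)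

lemma pi_gt : (3.141592:ℝ) < π := Real.pi_gt_d6
lemma pi_lt : π < 3.141593 := Real.pi_lt_d6
lemma pi2pos : (0:ℝ) < π - 2 := by nlinarith [pi_gt]
lemma hK_lb : (7:ℝ)/4 ≤ KK := by
  rw [KK, le_div_iff₀ pi2pos]; nlinarith [pi_lt]
lemma hK_ub : KK ≤ 219/125 := by
  rw [KK, div_le_iff₀ pi2pos]; nlinarith [pi_gt]

lemma hasDerivAt_cos_lin (t : ℝ) :
    HasDerivAt (fun y : ℝ => Real.cos (π/2*y)) (-(π/2) * Real.sin (π/2*t)) t := by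
  have h := (Real.hasDerivAt_cos (π/2*t)).comp t ((hasDerivAt_id t).const_mul (π/2))
  have h2 : HasDerivAt (fun y : ℝ => Real.cos (π/2*y)) (-Real.sin (π/2*t) * (π/2)) t := by
    exact h.congr_deriv (by ring)
  rw [show -(π/2) * Real.sin (π/2*t) = -Real.sin (π/2*t) * (π/2) by ring]
  exact h2

lemma hasDerivAt_sin_lin (t : ℝ) :
    HasDerivAt (fun y : ℝ => Real.sin (π/2*y)) (π/2 * Real.cos (π/2*t)) t := by
  have h := (Real.hasDerivAt_sin (π/2*t)).comp t ((hasDerivAt_id t).const_mul (π/2))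
  have h2 : HasDerivAt (fun y : ℝ => Real.sin (π/2*y)) (Real.cos (π/2*t) * (π/2)) t := by
    exact h.congr_deriv (by ring)
  rw [show π/2 * Real.cos (π/2*t) = Real.cos (π/2*t) * (π/2) by ring]
  exact h2

lemma chi_hasDeriv {t : ℝ} (ht : 0 < t) : HasDerivAt chi (chi' t) t := by
  have h1 : HasDerivAt (fun y : ℝ => y ^ KK) (KK * t ^ (KK-1)) t :=
    Real.hasDerivAt_rpow_const (Or.inl ht.ne')
  have h := (h1.add (hasDerivAt_cos_lin t)).sub_const 1
  unfold chi chi'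
  exact h.congr_deriv (by ring)

lemma chi'_hasDeriv {t : ℝ} (ht : 0 < t) :
    HasDerivAt chi' (KK*(KK-1)*t^(KK-2) - (π/2)^2 * Real.cos (π/2*t)) t := by
  have h1 : HasDerivAt (fun y : ℝ => y ^ (KK-1)) ((KK-1) * t ^ (KK-1-1)) t :=
    Real.hasDerivAt_rpow_const (Or.inl ht.ne')
  have h2 := (h1.const_mul KK).sub ((hasDerivAt_sin_lin t).const_mul (π/2))
  unfold chi'
  exact h2.congr_deriv (by rw [show KK - 1 - 1 = KK - 2 by ring]; ring)
set_option maxHeartbeats 1000000 in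
lemma chi'_nonpos_0 {t : ℝ} (h1 : (7/20 : ℝ) ≤ t) (h2 : t ≤ (9/25 : ℝ)) :
    chi' t ≤ 0 := by
  have ht0 : (0:ℝ) < t := by linarith
  have ht1 : t ≤ 1 := by linarith
  have hpow0 : 0 ≤ t ^ (KK-1) := (Real.rpow_pos_of_pos ht0 _).le
  have hS0 : 0 ≤ Real.sin (π/2*t) := Real.sin_nonneg_of_nonneg_of_le_pi
    (by positivity) (by nlinarith [mul_nonneg (sub_nonneg.mpr ht1) pi_pos.le, pi_pos])
  have e1 : t ^ (KK - 1) ≤ (11619/25000 : ℝ) := by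
    have a1 : t ^ (KK-1) ≤ t ^ ((3:ℝ)/4) :=
      Real.rpow_le_rpow_of_exponent_ge ht0 ht1 (by linarith [hK_lb])
    have a2 : t ^ ((3:ℝ)/4) ≤ (9/25 : ℝ) ^ ((3:ℝ)/4) :=
      Real.rpow_le_rpow ht0.le (by linarith [h2]) (by norm_num)
    have a3 : (9/25 : ℝ) ^ ((3:ℝ)/4) ≤ (11619/25000 : ℝ) :=
      rpow_rat_le (by norm_num) (by norm_num) 3 4 (by norm_num) (by norm_num)
    linarith
  have e2 : KK * t ^ (KK-1) ≤ 219/125 * (11619/25000 : ℝ) :=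
    mul_le_mul hK_ub e1 hpow0 (by norm_num)
  have e3 : (52249/100000 : ℝ) ≤ Real.sin (π/2*t) := by
    have b1 : (54977/100000 : ℝ) ≤ π/2*t := by nlinarith [pi_gt, h1, ht0.le]
    have b2 : Real.sin (54977/100000 : ℝ) ≤ Real.sin (π/2*t) := by
      apply Real.strictMonoOn_sin.monotoneOn ⟨by nlinarith [pi_gt], by nlinarith [pi_gt]⟩
        ⟨by nlinarith [pi_gt, ht0.le], by nlinarith [pi_gt, mul_nonneg (sub_nonneg.mpr ht1) pi_pos.le]⟩ b1
    have b3 : (52249/100000 : ℝ) ≤ Real.sin (54977/100000 : ℝ) := by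
      have hb := sin_ge_sept (x := (54977/100000 : ℝ)) (by norm_num)
      have : (52249/100000 : ℝ) ≤ (54977/100000 : ℝ) - (54977/100000 : ℝ)^3/6 + (54977/100000 : ℝ)^5/120 - (54977/100000 : ℝ)^7/5040 := by norm_num
      linarith
    linarith
  have k1 : 0 ≤ (π/2 - 3141592/2000000 : ℝ) := by nlinarith [pi_gt]
  have k2 : 0 ≤ Real.sin (π/2*t) - (52249/100000 : ℝ) := by linarith
  simp only [chi']
  nlinarith [mul_nonneg k1 hS0, mul_nonneg (show (0:ℝ) ≤ 3141592/2000000 by norm_num) k2]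

set_option maxHeartbeats 1000000 in
lemma chi'_nonpos_1 {t : ℝ} (h1 : (9/25 : ℝ) ≤ t) (h2 : t ≤ (37/100 : ℝ)) :
    chi' t ≤ 0 := by
  have ht0 : (0:ℝ) < t := by linarith
  have ht1 : t ≤ 1 := by linarith
  have hpow0 : 0 ≤ t ^ (KK-1) := (Real.rpow_pos_of_pos ht0 _).le
  have hS0 : 0 ≤ Real.sin (π/2*t) := Real.sin_nonneg_of_nonneg_of_le_pi
    (by positivity) (by nlinarith [mul_nonneg (sub_nonneg.mpr ht1) pi_pos.le, pi_pos])
  have e1 : t ^ (KK - 1) ≤ (474409/1000000 : ℝ) := by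
    have a1 : t ^ (KK-1) ≤ t ^ ((3:ℝ)/4) :=
      Real.rpow_le_rpow_of_exponent_ge ht0 ht1 (by linarith [hK_lb])
    have a2 : t ^ ((3:ℝ)/4) ≤ (37/100 : ℝ) ^ ((3:ℝ)/4) :=
      Real.rpow_le_rpow ht0.le (by linarith [h2]) (by norm_num)
    have a3 : (37/100 : ℝ) ^ ((3:ℝ)/4) ≤ (474409/1000000 : ℝ) :=
      rpow_rat_le (by norm_num) (by norm_num) 3 4 (by norm_num) (by norm_num)
    linarith
  have e2 : KK * t ^ (KK-1) ≤ 219/125 * (474409/1000000 : ℝ) :=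
    mul_le_mul hK_ub e1 hpow0 (by norm_num)
  have e3 : (26791/50000 : ℝ) ≤ Real.sin (π/2*t) := by
    have b1 : (14137/25000 : ℝ) ≤ π/2*t := by nlinarith [pi_gt, h1, ht0.le]
    have b2 : Real.sin (14137/25000 : ℝ) ≤ Real.sin (π/2*t) := by
      apply Real.strictMonoOn_sin.monotoneOn ⟨by nlinarith [pi_gt], by nlinarith [pi_gt]⟩
        ⟨by nlinarith [pi_gt, ht0.le], by nlinarith [pi_gt, mul_nonneg (sub_nonneg.mpr ht1) pi_pos.le]⟩ b1
    have b3 : (26791/50000 : ℝ) ≤ Real.sin (14137/25000 : ℝ) := by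
      have hb := sin_ge_sept (x := (14137/25000 : ℝ)) (by norm_num)
      have : (26791/50000 : ℝ) ≤ (14137/25000 : ℝ) - (14137/25000 : ℝ)^3/6 + (14137/25000 : ℝ)^5/120 - (14137/25000 : ℝ)^7/5040 := by norm_num
      linarith
    linarith
  have k1 : 0 ≤ (π/2 - 3141592/2000000 : ℝ) := by nlinarith [pi_gt]
  have k2 : 0 ≤ Real.sin (π/2*t) - (26791/50000 : ℝ) := by linarith
  simp only [chi']
  nlinarith [mul_nonneg k1 hS0, mul_nonneg (show (0:ℝ) ≤ 3141592/2000000 by norm_num) k2]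

set_option maxHeartbeats 1000000 in
lemma chi'_nonpos_2 {t : ℝ} (h1 : (37/100 : ℝ) ≤ t) (h2 : t ≤ (19/50 : ℝ)) :
    chi' t ≤ 0 := by
  have ht0 : (0:ℝ) < t := by linarith
  have ht1 : t ≤ 1 := by linarith
  have hpow0 : 0 ≤ t ^ (KK-1) := (Real.rpow_pos_of_pos ht0 _).le
  have hS0 : 0 ≤ Real.sin (π/2*t) := Real.sin_nonneg_of_nonneg_of_le_pi
    (by positivity) (by nlinarith [mul_nonneg (sub_nonneg.mpr ht1) pi_pos.le, pi_pos])
  have e1 : t ^ (KK - 1) ≤ (483993/1000000 : ℝ) := by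
    have a1 : t ^ (KK-1) ≤ t ^ ((3:ℝ)/4) :=
      Real.rpow_le_rpow_of_exponent_ge ht0 ht1 (by linarith [hK_lb])
    have a2 : t ^ ((3:ℝ)/4) ≤ (19/50 : ℝ) ^ ((3:ℝ)/4) :=
      Real.rpow_le_rpow ht0.le (by linarith [h2]) (by norm_num)
    have a3 : (19/50 : ℝ) ^ ((3:ℝ)/4) ≤ (483993/1000000 : ℝ) :=
      rpow_rat_le (by norm_num) (by norm_num) 3 4 (by norm_num) (by norm_num)
    linarith
  have e2 : KK * t ^ (KK-1) ≤ 219/125 * (483993/1000000 : ℝ) :=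
    mul_le_mul hK_ub e1 hpow0 (by norm_num)
  have e3 : (54901/100000 : ℝ) ≤ Real.sin (π/2*t) := by
    have b1 : (58119/100000 : ℝ) ≤ π/2*t := by nlinarith [pi_gt, h1, ht0.le]
    have b2 : Real.sin (58119/100000 : ℝ) ≤ Real.sin (π/2*t) := by
      apply Real.strictMonoOn_sin.monotoneOn ⟨by nlinarith [pi_gt], by nlinarith [pi_gt]⟩
        ⟨by nlinarith [pi_gt, ht0.le], by nlinarith [pi_gt, mul_nonneg (sub_nonneg.mpr ht1) pi_pos.le]⟩ b1
    have b3 : (54901/100000 : ℝ) ≤ Real.sin (58119/100000 : ℝ) := by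
      have hb := sin_ge_sept (x := (58119/100000 : ℝ)) (by norm_num)
      have : (54901/100000 : ℝ) ≤ (58119/100000 : ℝ) - (58119/100000 : ℝ)^3/6 + (58119/100000 : ℝ)^5/120 - (58119/100000 : ℝ)^7/5040 := by norm_num
      linarith
    linarith
  have k1 : 0 ≤ (π/2 - 3141592/2000000 : ℝ) := by nlinarith [pi_gt]
  have k2 : 0 ≤ Real.sin (π/2*t) - (54901/100000 : ℝ) := by linarith
  simp only [chi']
  nlinarith [mul_nonneg k1 hS0, mul_nonneg (show (0:ℝ) ≤ 3141592/2000000 by norm_num) k2]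

set_option maxHeartbeats 1000000 in
lemma chi'_nonpos_3 {t : ℝ} (h1 : (19/50 : ℝ) ≤ t) (h2 : t ≤ (2/5 : ℝ)) :
    chi' t ≤ 0 := by
  have ht0 : (0:ℝ) < t := by linarith
  have ht1 : t ≤ 1 := by linarith
  have hpow0 : 0 ≤ t ^ (KK-1) := (Real.rpow_pos_of_pos ht0 _).le
  have hS0 : 0 ≤ Real.sin (π/2*t) := Real.sin_nonneg_of_nonneg_of_le_pi
    (by positivity) (by nlinarith [mul_nonneg (sub_nonneg.mpr ht1) pi_pos.le, pi_pos])
  have e1 : t ^ (KK - 1) ≤ (20119/40000 : ℝ) := by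
    have a1 : t ^ (KK-1) ≤ t ^ ((3:ℝ)/4) :=
      Real.rpow_le_rpow_of_exponent_ge ht0 ht1 (by linarith [hK_lb])
    have a2 : t ^ ((3:ℝ)/4) ≤ (2/5 : ℝ) ^ ((3:ℝ)/4) :=
      Real.rpow_le_rpow ht0.le (by linarith [h2]) (by norm_num)
    have a3 : (2/5 : ℝ) ^ ((3:ℝ)/4) ≤ (20119/40000 : ℝ) :=
      rpow_rat_le (by norm_num) (by norm_num) 3 4 (by norm_num) (by norm_num)
    linarith
  have e2 : KK * t ^ (KK-1) ≤ 219/125 * (20119/40000 : ℝ) :=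
    mul_le_mul hK_ub e1 hpow0 (by norm_num)
  have e3 : (3513/6250 : ℝ) ≤ Real.sin (π/2*t) := by
    have b1 : (5969/10000 : ℝ) ≤ π/2*t := by nlinarith [pi_gt, h1, ht0.le]
    have b2 : Real.sin (5969/10000 : ℝ) ≤ Real.sin (π/2*t) := by
      apply Real.strictMonoOn_sin.monotoneOn ⟨by nlinarith [pi_gt], by nlinarith [pi_gt]⟩
        ⟨by nlinarith [pi_gt, ht0.le], by nlinarith [pi_gt, mul_nonneg (sub_nonneg.mpr ht1) pi_pos.le]⟩ b1
    have b3 : (3513/6250 : ℝ) ≤ Real.sin (5969/10000 : ℝ) := by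
      have hb := sin_ge_sept (x := (5969/10000 : ℝ)) (by norm_num)
      have : (3513/6250 : ℝ) ≤ (5969/10000 : ℝ) - (5969/10000 : ℝ)^3/6 + (5969/10000 : ℝ)^5/120 - (5969/10000 : ℝ)^7/5040 := by norm_num
      linarith
    linarith
  have k1 : 0 ≤ (π/2 - 3141592/2000000 : ℝ) := by nlinarith [pi_gt]
  have k2 : 0 ≤ Real.sin (π/2*t) - (3513/6250 : ℝ) := by linarith
  simp only [chi']
  nlinarith [mul_nonneg k1 hS0, mul_nonneg (show (0:ℝ) ≤ 3141592/2000000 by norm_num) k2]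

set_option maxHeartbeats 1000000 in
lemma chi'_nonpos_4 {t : ℝ} (h1 : (2/5 : ℝ) ≤ t) (h2 : t ≤ (21/50 : ℝ)) :
    chi' t ≤ 0 := by
  have ht0 : (0:ℝ) < t := by linarith
  have ht1 : t ≤ 1 := by linarith
  have hpow0 : 0 ≤ t ^ (KK-1) := (Real.rpow_pos_of_pos ht0 _).le
  have hS0 : 0 ≤ Real.sin (π/2*t) := Real.sin_nonneg_of_nonneg_of_le_pi
    (by positivity) (by nlinarith [mul_nonneg (sub_nonneg.mpr ht1) pi_pos.le, pi_pos])
  have e1 : t ^ (KK - 1) ≤ (521721/1000000 : ℝ) := by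
    have a1 : t ^ (KK-1) ≤ t ^ ((3:ℝ)/4) :=
      Real.rpow_le_rpow_of_exponent_ge ht0 ht1 (by linarith [hK_lb])
    have a2 : t ^ ((3:ℝ)/4) ≤ (21/50 : ℝ) ^ ((3:ℝ)/4) :=
      Real.rpow_le_rpow ht0.le (by linarith [h2]) (by norm_num)
    have a3 : (21/50 : ℝ) ^ ((3:ℝ)/4) ≤ (521721/1000000 : ℝ) :=
      rpow_rat_le (by norm_num) (by norm_num) 3 4 (by norm_num) (by norm_num)
    linarith
  have e2 : KK * t ^ (KK-1) ≤ 219/125 * (521721/1000000 : ℝ) :=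
    mul_le_mul hK_ub e1 hpow0 (by norm_num)
  have e3 : (58777/100000 : ℝ) ≤ Real.sin (π/2*t) := by
    have b1 : (62831/100000 : ℝ) ≤ π/2*t := by nlinarith [pi_gt, h1, ht0.le]
    have b2 : Real.sin (62831/100000 : ℝ) ≤ Real.sin (π/2*t) := by
      apply Real.strictMonoOn_sin.monotoneOn ⟨by nlinarith [pi_gt], by nlinarith [pi_gt]⟩
        ⟨by nlinarith [pi_gt, ht0.le], by nlinarith [pi_gt, mul_nonneg (sub_nonneg.mpr ht1) pi_pos.le]⟩ b1
    have b3 : (58777/100000 : ℝ) ≤ Real.sin (62831/100000 : ℝ) := by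
      have hb := sin_ge_sept (x := (62831/100000 : ℝ)) (by norm_num)
      have : (58777/100000 : ℝ) ≤ (62831/100000 : ℝ) - (62831/100000 : ℝ)^3/6 + (62831/100000 : ℝ)^5/120 - (62831/100000 : ℝ)^7/5040 := by norm_num
      linarith
    linarith
  have k1 : 0 ≤ (π/2 - 3141592/2000000 : ℝ) := by nlinarith [pi_gt]
  have k2 : 0 ≤ Real.sin (π/2*t) - (58777/100000 : ℝ) := by linarith
  simp only [chi']
  nlinarith [mul_nonneg k1 hS0, mul_nonneg (show (0:ℝ) ≤ 3141592/2000000 by norm_num) k2]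

set_option maxHeartbeats 1000000 in
lemma chi'_nonpos_5 {t : ℝ} (h1 : (21/50 : ℝ) ≤ t) (h2 : t ≤ (11/25 : ℝ)) :
    chi' t ≤ 0 := by
  have ht0 : (0:ℝ) < t := by linarith
  have ht1 : t ≤ 1 := by linarith
  have hpow0 : 0 ≤ t ^ (KK-1) := (Real.rpow_pos_of_pos ht0 _).le
  have hS0 : 0 ≤ Real.sin (π/2*t) := Real.sin_nonneg_of_nonneg_of_le_pi
    (by positivity) (by nlinarith [mul_nonneg (sub_nonneg.mpr ht1) pi_pos.le, pi_pos])
  have e1 : t ^ (KK - 1) ≤ (108049/200000 : ℝ) := by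
    have a1 : t ^ (KK-1) ≤ t ^ ((3:ℝ)/4) :=
      Real.rpow_le_rpow_of_exponent_ge ht0 ht1 (by linarith [hK_lb])
    have a2 : t ^ ((3:ℝ)/4) ≤ (11/25 : ℝ) ^ ((3:ℝ)/4) :=
      Real.rpow_le_rpow ht0.le (by linarith [h2]) (by norm_num)
    have a3 : (11/25 : ℝ) ^ ((3:ℝ)/4) ≤ (108049/200000 : ℝ) :=
      rpow_rat_le (by norm_num) (by norm_num) 3 4 (by norm_num) (by norm_num)
    linarith
  have e2 : KK * t ^ (KK-1) ≤ 219/125 * (108049/200000 : ℝ) :=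
    mul_le_mul hK_ub e1 hpow0 (by norm_num)
  have e3 : (6129/10000 : ℝ) ≤ Real.sin (π/2*t) := by
    have b1 : (65973/100000 : ℝ) ≤ π/2*t := by nlinarith [pi_gt, h1, ht0.le]
    have b2 : Real.sin (65973/100000 : ℝ) ≤ Real.sin (π/2*t) := by
      apply Real.strictMonoOn_sin.monotoneOn ⟨by nlinarith [pi_gt], by nlinarith [pi_gt]⟩
        ⟨by nlinarith [pi_gt, ht0.le], by nlinarith [pi_gt, mul_nonneg (sub_nonneg.mpr ht1) pi_pos.le]⟩ b1
    have b3 : (6129/10000 : ℝ) ≤ Real.sin (65973/100000 : ℝ) := by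
      have hb := sin_ge_sept (x := (65973/100000 : ℝ)) (by norm_num)
      have : (6129/10000 : ℝ) ≤ (65973/100000 : ℝ) - (65973/100000 : ℝ)^3/6 + (65973/100000 : ℝ)^5/120 - (65973/100000 : ℝ)^7/5040 := by norm_num
      linarith
    linarith
  have k1 : 0 ≤ (π/2 - 3141592/2000000 : ℝ) := by nlinarith [pi_gt]
  have k2 : 0 ≤ Real.sin (π/2*t) - (6129/10000 : ℝ) := by linarith
  simp only [chi']
  nlinarith [mul_nonneg k1 hS0, mul_nonneg (show (0:ℝ) ≤ 3141592/2000000 by norm_num) k2]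

set_option maxHeartbeats 1000000 in
lemma chi'_nonpos_6 {t : ℝ} (h1 : (11/25 : ℝ) ≤ t) (h2 : t ≤ (47/100 : ℝ)) :
    chi' t ≤ 0 := by
  have ht0 : (0:ℝ) < t := by linarith
  have ht1 : t ≤ 1 := by linarith
  have hpow0 : 0 ≤ t ^ (KK-1) := (Real.rpow_pos_of_pos ht0 _).le
  have hS0 : 0 ≤ Real.sin (π/2*t) := Real.sin_nonneg_of_nonneg_of_le_pi
    (by positivity) (by nlinarith [mul_nonneg (sub_nonneg.mpr ht1) pi_pos.le, pi_pos])
  have e1 : t ^ (KK - 1) ≤ (283821/500000 : ℝ) := by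
    have a1 : t ^ (KK-1) ≤ t ^ ((3:ℝ)/4) :=
      Real.rpow_le_rpow_of_exponent_ge ht0 ht1 (by linarith [hK_lb])
    have a2 : t ^ ((3:ℝ)/4) ≤ (47/100 : ℝ) ^ ((3:ℝ)/4) :=
      Real.rpow_le_rpow ht0.le (by linarith [h2]) (by norm_num)
    have a3 : (47/100 : ℝ) ^ ((3:ℝ)/4) ≤ (283821/500000 : ℝ) :=
      rpow_rat_le (by norm_num) (by norm_num) 3 4 (by norm_num) (by norm_num)
    linarith
  have e2 : KK * t ^ (KK-1) ≤ 219/125 * (283821/500000 : ℝ) :=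
    mul_le_mul hK_ub e1 hpow0 (by norm_num)
  have e3 : (31871/50000 : ℝ) ≤ Real.sin (π/2*t) := by
    have b1 : (13823/20000 : ℝ) ≤ π/2*t := by nlinarith [pi_gt, h1, ht0.le]
    have b2 : Real.sin (13823/20000 : ℝ) ≤ Real.sin (π/2*t) := by
      apply Real.strictMonoOn_sin.monotoneOn ⟨by nlinarith [pi_gt], by nlinarith [pi_gt]⟩
        ⟨by nlinarith [pi_gt, ht0.le], by nlinarith [pi_gt, mul_nonneg (sub_nonneg.mpr ht1) pi_pos.le]⟩ b1
    have b3 : (31871/50000 : ℝ) ≤ Real.sin (13823/20000 : ℝ) := by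
      have hb := sin_ge_sept (x := (13823/20000 : ℝ)) (by norm_num)
      have : (31871/50000 : ℝ) ≤ (13823/20000 : ℝ) - (13823/20000 : ℝ)^3/6 + (13823/20000 : ℝ)^5/120 - (13823/20000 : ℝ)^7/5040 := by norm_num
      linarith
    linarith
  have k1 : 0 ≤ (π/2 - 3141592/2000000 : ℝ) := by nlinarith [pi_gt]
  have k2 : 0 ≤ Real.sin (π/2*t) - (31871/50000 : ℝ) := by linarith
  simp only [chi']
  nlinarith [mul_nonneg k1 hS0, mul_nonneg (show (0:ℝ) ≤ 3141592/2000000 by norm_num) k2]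

set_option maxHeartbeats 1000000 in
lemma chi'_nonpos_7 {t : ℝ} (h1 : (47/100 : ℝ) ≤ t) (h2 : t ≤ (1/2 : ℝ)) :
    chi' t ≤ 0 := by
  have ht0 : (0:ℝ) < t := by linarith
  have ht1 : t ≤ 1 := by linarith
  have hpow0 : 0 ≤ t ^ (KK-1) := (Real.rpow_pos_of_pos ht0 _).le
  have hS0 : 0 ≤ Real.sin (π/2*t) := Real.sin_nonneg_of_nonneg_of_le_pi
    (by positivity) (by nlinarith [mul_nonneg (sub_nonneg.mpr ht1) pi_pos.le, pi_pos])
  have e1 : t ^ (KK - 1) ≤ (118921/200000 : ℝ) := by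
    have a1 : t ^ (KK-1) ≤ t ^ ((3:ℝ)/4) :=
      Real.rpow_le_rpow_of_exponent_ge ht0 ht1 (by linarith [hK_lb])
    have a2 : t ^ ((3:ℝ)/4) ≤ (1/2 : ℝ) ^ ((3:ℝ)/4) :=
      Real.rpow_le_rpow ht0.le (by linarith [h2]) (by norm_num)
    have a3 : (1/2 : ℝ) ^ ((3:ℝ)/4) ≤ (118921/200000 : ℝ) :=
      rpow_rat_le (by norm_num) (by norm_num) 3 4 (by norm_num) (by norm_num)
    linarith
  have e2 : KK * t ^ (KK-1) ≤ 219/125 * (118921/200000 : ℝ) :=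
    mul_le_mul hK_ub e1 hpow0 (by norm_num)
  have e3 : (673/1000 : ℝ) ≤ Real.sin (π/2*t) := by
    have b1 : (73827/100000 : ℝ) ≤ π/2*t := by nlinarith [pi_gt, h1, ht0.le]
    have b2 : Real.sin (73827/100000 : ℝ) ≤ Real.sin (π/2*t) := by
      apply Real.strictMonoOn_sin.monotoneOn ⟨by nlinarith [pi_gt], by nlinarith [pi_gt]⟩
        ⟨by nlinarith [pi_gt, ht0.le], by nlinarith [pi_gt, mul_nonneg (sub_nonneg.mpr ht1) pi_pos.le]⟩ b1
    have b3 : (673/1000 : ℝ) ≤ Real.sin (73827/100000 : ℝ) := by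
      have hb := sin_ge_sept (x := (73827/100000 : ℝ)) (by norm_num)
      have : (673/1000 : ℝ) ≤ (73827/100000 : ℝ) - (73827/100000 : ℝ)^3/6 + (73827/100000 : ℝ)^5/120 - (73827/100000 : ℝ)^7/5040 := by norm_num
      linarith
    linarith
  have k1 : 0 ≤ (π/2 - 3141592/2000000 : ℝ) := by nlinarith [pi_gt]
  have k2 : 0 ≤ Real.sin (π/2*t) - (673/1000 : ℝ) := by linarith
  simp only [chi']
  nlinarith [mul_nonneg k1 hS0, mul_nonneg (show (0:ℝ) ≤ 3141592/2000000 by norm_num) k2]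

set_option maxHeartbeats 1000000 in
lemma chi'_nonpos_8 {t : ℝ} (h1 : (1/2 : ℝ) ≤ t) (h2 : t ≤ (53/100 : ℝ)) :
    chi' t ≤ 0 := by
  have ht0 : (0:ℝ) < t := by linarith
  have ht1 : t ≤ 1 := by linarith
  have hpow0 : 0 ≤ t ^ (KK-1) := (Real.rpow_pos_of_pos ht0 _).le
  have hS0 : 0 ≤ Real.sin (π/2*t) := Real.sin_nonneg_of_nonneg_of_le_pi
    (by positivity) (by nlinarith [mul_nonneg (sub_nonneg.mpr ht1) pi_pos.le, pi_pos])
  have e1 : t ^ (KK - 1) ≤ (310583/500000 : ℝ) := by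
    have a1 : t ^ (KK-1) ≤ t ^ ((3:ℝ)/4) :=
      Real.rpow_le_rpow_of_exponent_ge ht0 ht1 (by linarith [hK_lb])
    have a2 : t ^ ((3:ℝ)/4) ≤ (53/100 : ℝ) ^ ((3:ℝ)/4) :=
      Real.rpow_le_rpow ht0.le (by linarith [h2]) (by norm_num)
    have a3 : (53/100 : ℝ) ^ ((3:ℝ)/4) ≤ (310583/500000 : ℝ) :=
      rpow_rat_le (by norm_num) (by norm_num) 3 4 (by norm_num) (by norm_num)
    linarith
  have e2 : KK * t ^ (KK-1) ≤ 219/125 * (310583/500000 : ℝ) :=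
    mul_le_mul hK_ub e1 hpow0 (by norm_num)
  have e3 : (7071/10000 : ℝ) ≤ Real.sin (π/2*t) := by
    have b1 : (78539/100000 : ℝ) ≤ π/2*t := by nlinarith [pi_gt, h1, ht0.le]
    have b2 : Real.sin (78539/100000 : ℝ) ≤ Real.sin (π/2*t) := by
      apply Real.strictMonoOn_sin.monotoneOn ⟨by nlinarith [pi_gt], by nlinarith [pi_gt]⟩
        ⟨by nlinarith [pi_gt, ht0.le], by nlinarith [pi_gt, mul_nonneg (sub_nonneg.mpr ht1) pi_pos.le]⟩ b1
    have b3 : (7071/10000 : ℝ) ≤ Real.sin (78539/100000 : ℝ) := by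
      have hb := sin_ge_sept (x := (78539/100000 : ℝ)) (by norm_num)
      have : (7071/10000 : ℝ) ≤ (78539/100000 : ℝ) - (78539/100000 : ℝ)^3/6 + (78539/100000 : ℝ)^5/120 - (78539/100000 : ℝ)^7/5040 := by norm_num
      linarith
    linarith
  have k1 : 0 ≤ (π/2 - 3141592/2000000 : ℝ) := by nlinarith [pi_gt]
  have k2 : 0 ≤ Real.sin (π/2*t) - (7071/10000 : ℝ) := by linarith
  simp only [chi']
  nlinarith [mul_nonneg k1 hS0, mul_nonneg (show (0:ℝ) ≤ 3141592/2000000 by norm_num) k2]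

set_option maxHeartbeats 1000000 in
lemma chi'_nonpos_9 {t : ℝ} (h1 : (53/100 : ℝ) ≤ t) (h2 : t ≤ (14/25 : ℝ)) :
    chi' t ≤ 0 := by
  have ht0 : (0:ℝ) < t := by linarith
  have ht1 : t ≤ 1 := by linarith
  have hpow0 : 0 ≤ t ^ (KK-1) := (Real.rpow_pos_of_pos ht0 _).le
  have hS0 : 0 ≤ Real.sin (π/2*t) := Real.sin_nonneg_of_nonneg_of_le_pi
    (by positivity) (by nlinarith [mul_nonneg (sub_nonneg.mpr ht1) pi_pos.le, pi_pos])
  have e1 : t ^ (KK - 1) ≤ (323677/500000 : ℝ) := by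
    have a1 : t ^ (KK-1) ≤ t ^ ((3:ℝ)/4) :=
      Real.rpow_le_rpow_of_exponent_ge ht0 ht1 (by linarith [hK_lb])
    have a2 : t ^ ((3:ℝ)/4) ≤ (14/25 : ℝ) ^ ((3:ℝ)/4) :=
      Real.rpow_le_rpow ht0.le (by linarith [h2]) (by norm_num)
    have a3 : (14/25 : ℝ) ^ ((3:ℝ)/4) ≤ (323677/500000 : ℝ) :=
      rpow_rat_le (by norm_num) (by norm_num) 3 4 (by norm_num) (by norm_num)
    linarith
  have e2 : KK * t ^ (KK-1) ≤ 219/125 * (323677/500000 : ℝ) :=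
    mul_le_mul hK_ub e1 hpow0 (by norm_num)
  have e3 : (36981/50000 : ℝ) ≤ Real.sin (π/2*t) := by
    have b1 : (20813/25000 : ℝ) ≤ π/2*t := by nlinarith [pi_gt, h1, ht0.le]
    have b2 : Real.sin (20813/25000 : ℝ) ≤ Real.sin (π/2*t) := by
      apply Real.strictMonoOn_sin.monotoneOn ⟨by nlinarith [pi_gt], by nlinarith [pi_gt]⟩
        ⟨by nlinarith [pi_gt, ht0.le], by nlinarith [pi_gt, mul_nonneg (sub_nonneg.mpr ht1) pi_pos.le]⟩ b1
    have b3 : (36981/50000 : ℝ) ≤ Real.sin (20813/25000 : ℝ) := by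
      have hb := sin_ge_sept (x := (20813/25000 : ℝ)) (by norm_num)
      have : (36981/50000 : ℝ) ≤ (20813/25000 : ℝ) - (20813/25000 : ℝ)^3/6 + (20813/25000 : ℝ)^5/120 - (20813/25000 : ℝ)^7/5040 := by norm_num
      linarith
    linarith
  have k1 : 0 ≤ (π/2 - 3141592/2000000 : ℝ) := by nlinarith [pi_gt]
  have k2 : 0 ≤ Real.sin (π/2*t) - (36981/50000 : ℝ) := by linarith
  simp only [chi']
  nlinarith [mul_nonneg k1 hS0, mul_nonneg (show (0:ℝ) ≤ 3141592/2000000 by norm_num) k2]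

set_option maxHeartbeats 1000000 in
lemma chi'_nonpos_10 {t : ℝ} (h1 : (14/25 : ℝ) ≤ t) (h2 : t ≤ (59/100 : ℝ)) :
    chi' t ≤ 0 := by
  have ht0 : (0:ℝ) < t := by linarith
  have ht1 : t ≤ 1 := by linarith
  have hpow0 : 0 ≤ t ^ (KK-1) := (Real.rpow_pos_of_pos ht0 _).le
  have hS0 : 0 ≤ Real.sin (π/2*t) := Real.sin_nonneg_of_nonneg_of_le_pi
    (by positivity) (by nlinarith [mul_nonneg (sub_nonneg.mpr ht1) pi_pos.le, pi_pos])
  have e1 : t ^ (KK - 1) ≤ (336597/500000 : ℝ) := by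
    have a1 : t ^ (KK-1) ≤ t ^ ((3:ℝ)/4) :=
      Real.rpow_le_rpow_of_exponent_ge ht0 ht1 (by linarith [hK_lb])
    have a2 : t ^ ((3:ℝ)/4) ≤ (59/100 : ℝ) ^ ((3:ℝ)/4) :=
      Real.rpow_le_rpow ht0.le (by linarith [h2]) (by norm_num)
    have a3 : (59/100 : ℝ) ^ ((3:ℝ)/4) ≤ (336597/500000 : ℝ) :=
      rpow_rat_le (by norm_num) (by norm_num) 3 4 (by norm_num) (by norm_num)
    linarith
  have e2 : KK * t ^ (KK-1) ≤ 219/125 * (336597/500000 : ℝ) :=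
    mul_le_mul hK_ub e1 hpow0 (by norm_num)
  have e3 : (1541/2000 : ℝ) ≤ Real.sin (π/2*t) := by
    have b1 : (21991/25000 : ℝ) ≤ π/2*t := by nlinarith [pi_gt, h1, ht0.le]
    have b2 : Real.sin (21991/25000 : ℝ) ≤ Real.sin (π/2*t) := by
      apply Real.strictMonoOn_sin.monotoneOn ⟨by nlinarith [pi_gt], by nlinarith [pi_gt]⟩
        ⟨by nlinarith [pi_gt, ht0.le], by nlinarith [pi_gt, mul_nonneg (sub_nonneg.mpr ht1) pi_pos.le]⟩ b1
    have b3 : (1541/2000 : ℝ) ≤ Real.sin (21991/25000 : ℝ) := by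
      have hb := sin_ge_sept (x := (21991/25000 : ℝ)) (by norm_num)
      have : (1541/2000 : ℝ) ≤ (21991/25000 : ℝ) - (21991/25000 : ℝ)^3/6 + (21991/25000 : ℝ)^5/120 - (21991/25000 : ℝ)^7/5040 := by norm_num
      linarith
    linarith
  have k1 : 0 ≤ (π/2 - 3141592/2000000 : ℝ) := by nlinarith [pi_gt]
  have k2 : 0 ≤ Real.sin (π/2*t) - (1541/2000 : ℝ) := by linarith
  simp only [chi']
  nlinarith [mul_nonneg k1 hS0, mul_nonneg (show (0:ℝ) ≤ 3141592/2000000 by norm_num) k2]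

set_option maxHeartbeats 1000000 in
lemma chi'_nonpos_11 {t : ℝ} (h1 : (59/100 : ℝ) ≤ t) (h2 : t ≤ (31/50 : ℝ)) :
    chi' t ≤ 0 := by
  have ht0 : (0:ℝ) < t := by linarith
  have ht1 : t ≤ 1 := by linarith
  have hpow0 : 0 ≤ t ^ (KK-1) := (Real.rpow_pos_of_pos ht0 _).le
  have hS0 : 0 ≤ Real.sin (π/2*t) := Real.sin_nonneg_of_nonneg_of_le_pi
    (by positivity) (by nlinarith [mul_nonneg (sub_nonneg.mpr ht1) pi_pos.le, pi_pos])
  have e1 : t ^ (KK - 1) ≤ (349353/500000 : ℝ) := by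
    have a1 : t ^ (KK-1) ≤ t ^ ((3:ℝ)/4) :=
      Real.rpow_le_rpow_of_exponent_ge ht0 ht1 (by linarith [hK_lb])
    have a2 : t ^ ((3:ℝ)/4) ≤ (31/50 : ℝ) ^ ((3:ℝ)/4) :=
      Real.rpow_le_rpow ht0.le (by linarith [h2]) (by norm_num)
    have a3 : (31/50 : ℝ) ^ ((3:ℝ)/4) ≤ (349353/500000 : ℝ) :=
      rpow_rat_le (by norm_num) (by norm_num) 3 4 (by norm_num) (by norm_num)
    linarith
  have e2 : KK * t ^ (KK-1) ≤ 219/125 * (349353/500000 : ℝ) :=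
    mul_le_mul hK_ub e1 hpow0 (by norm_num)
  have e3 : (79967/100000 : ℝ) ≤ Real.sin (π/2*t) := by
    have b1 : (23169/25000 : ℝ) ≤ π/2*t := by nlinarith [pi_gt, h1, ht0.le]
    have b2 : Real.sin (23169/25000 : ℝ) ≤ Real.sin (π/2*t) := by
      apply Real.strictMonoOn_sin.monotoneOn ⟨by nlinarith [pi_gt], by nlinarith [pi_gt]⟩
        ⟨by nlinarith [pi_gt, ht0.le], by nlinarith [pi_gt, mul_nonneg (sub_nonneg.mpr ht1) pi_pos.le]⟩ b1
    have b3 : (79967/100000 : ℝ) ≤ Real.sin (23169/25000 : ℝ) := by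
      have hb := sin_ge_sept (x := (23169/25000 : ℝ)) (by norm_num)
      have : (79967/100000 : ℝ) ≤ (23169/25000 : ℝ) - (23169/25000 : ℝ)^3/6 + (23169/25000 : ℝ)^5/120 - (23169/25000 : ℝ)^7/5040 := by norm_num
      linarith
    linarith
  have k1 : 0 ≤ (π/2 - 3141592/2000000 : ℝ) := by nlinarith [pi_gt]
  have k2 : 0 ≤ Real.sin (π/2*t) - (79967/100000 : ℝ) := by linarith
  simp only [chi']
  nlinarith [mul_nonneg k1 hS0, mul_nonneg (show (0:ℝ) ≤ 3141592/2000000 by norm_num) k2]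

lemma chi'_nonpos {t : ℝ} (h1 : (7/20 : ℝ) ≤ t) (h2 : t ≤ (31/50 : ℝ)) :
    chi' t ≤ 0 := by
  rcases le_or_gt t (9/25 : ℝ) with hc0|hc0
  · exact chi'_nonpos_0 h1 hc0
  rcases le_or_gt t (37/100 : ℝ) with hc1|hc1
  · exact chi'_nonpos_1 hc0.le hc1
  rcases le_or_gt t (19/50 : ℝ) with hc2|hc2
  · exact chi'_nonpos_2 hc1.le hc2
  rcases le_or_gt t (2/5 : ℝ) with hc3|hc3
  · exact chi'_nonpos_3 hc2.le hc3
  rcases le_or_gt t (21/50 : ℝ) with hc4|hc4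
  · exact chi'_nonpos_4 hc3.le hc4
  rcases le_or_gt t (11/25 : ℝ) with hc5|hc5
  · exact chi'_nonpos_5 hc4.le hc5
  rcases le_or_gt t (47/100 : ℝ) with hc6|hc6
  · exact chi'_nonpos_6 hc5.le hc6
  rcases le_or_gt t (1/2 : ℝ) with hc7|hc7
  · exact chi'_nonpos_7 hc6.le hc7
  rcases le_or_gt t (53/100 : ℝ) with hc8|hc8
  · exact chi'_nonpos_8 hc7.le hc8
  rcases le_or_gt t (14/25 : ℝ) with hc9|hc9
  · exact chi'_nonpos_9 hc8.le hc9
  rcases le_or_gt t (59/100 : ℝ) with hc10|hc10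
  · exact chi'_nonpos_10 hc9.le hc10
  exact chi'_nonpos_11 hc10.le h2

set_option maxHeartbeats 1000000 in
lemma chi''_nonneg_0 {t : ℝ} (h1 : (31/50 : ℝ) ≤ t) (h2 : t ≤ (13/20 : ℝ)) :
    0 ≤ KK*(KK-1)*t^(KK-2) - (π/2)^2 * Real.cos (π/2*t) := by
  have ht0 : (0:ℝ) < t := by linarith
  have ht1 : t ≤ 1 := by linarith
  have hC0 : 0 ≤ Real.cos (π/2*t) := Real.cos_nonneg_of_mem_Icc
    ⟨by nlinarith [pi_pos, ht0.le], by nlinarith [mul_nonneg (sub_nonneg.mpr ht1) pi_pos.le]⟩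
  have e1 : (278187/250000 : ℝ) ≤ t ^ (KK - 2) := by
    have a1 : t ^ (KK-2) ≥ t ^ (-((31:ℝ)/125)) :=
      Real.rpow_le_rpow_of_exponent_ge ht0 ht1 (by linarith [hK_ub])
    have a2 : t ^ (-((31:ℝ)/125)) ≥ (13/20 : ℝ) ^ (-((31:ℝ)/125)) := by
      have := rpow_neg_base_anti (a := t) (b := (13/20 : ℝ)) ht0 (by linarith [h2])
        (c := (31:ℝ)/125) (by norm_num)
      simpa using this
    have a3 : (278187/250000 : ℝ) ≤ (13/20 : ℝ) ^ (-((31:ℝ)/125)) :=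
      le_rpow_neg_rat (by norm_num) (by norm_num) 31 125 (by norm_num) (by norm_num)
    linarith
  have e2 : 21/16 * (278187/250000 : ℝ) ≤ KK*(KK-1) * t ^ (KK-2) := by
    have a4 : (21:ℝ)/16 ≤ KK*(KK-1) := by nlinarith [hK_lb]
    exact mul_le_mul a4 e1 (by norm_num) (le_trans (by norm_num) a4)
  have e3 : Real.cos (π/2*t) ≤ (28163/50000 : ℝ) := by
    have b1 : (97389/100000 : ℝ) ≤ π/2*t := by nlinarith [pi_gt, h1, ht0.le]
    have b2 : Real.cos (π/2*t) ≤ Real.cos (97389/100000 : ℝ) := by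
      apply Real.strictAntiOn_cos.antitoneOn ⟨by norm_num, by nlinarith [pi_gt]⟩
        ⟨by nlinarith [pi_gt, ht0.le], by nlinarith [pi_gt, mul_nonneg (sub_nonneg.mpr ht1) pi_pos.le]⟩ b1
    have b3 : Real.cos (97389/100000 : ℝ) ≤ (28163/50000 : ℝ) := by
      have hb := cos_le_quart (x := (97389/100000 : ℝ)) (by norm_num)
      have : (1:ℝ) - (97389/100000 : ℝ)^2/2 + (97389/100000 : ℝ)^4/24 ≤ (28163/50000 : ℝ) := by norm_num
      linarith
    linarith
  have k1 : 0 ≤ ((28163/50000 : ℝ) - Real.cos (π/2*t)) := by linarith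
  have k2 : (π/2)^2 ≤ (3141593/1000000/2:ℝ)^2 := by nlinarith [pi_lt, pi_pos]
  have k3 : (π/2)^2 * Real.cos (π/2*t) ≤ (3141593/1000000/2:ℝ)^2 * (28163/50000 : ℝ) := by
    nlinarith [mul_nonneg (sub_nonneg.mpr k2) hC0,
      mul_nonneg (show (0:ℝ) ≤ (3141593/1000000/2:ℝ)^2 by norm_num) k1]
  have k4 : (3141593/1000000/2:ℝ)^2 * (28163/50000 : ℝ) < 21/16 * (278187/250000 : ℝ) := by norm_num
  linarith

set_option maxHeartbeats 1000000 in
lemma chi''_nonneg_1 {t : ℝ} (h1 : (13/20 : ℝ) ≤ t) (h2 : t ≤ (7/10 : ℝ)) :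
    0 ≤ KK*(KK-1)*t^(KK-2) - (π/2)^2 * Real.cos (π/2*t) := by
  have ht0 : (0:ℝ) < t := by linarith
  have ht1 : t ≤ 1 := by linarith
  have hC0 : 0 ≤ Real.cos (π/2*t) := Real.cos_nonneg_of_mem_Icc
    ⟨by nlinarith [pi_pos, ht0.le], by nlinarith [mul_nonneg (sub_nonneg.mpr ht1) pi_pos.le]⟩
  have e1 : (273121/250000 : ℝ) ≤ t ^ (KK - 2) := by
    have a1 : t ^ (KK-2) ≥ t ^ (-((31:ℝ)/125)) :=
      Real.rpow_le_rpow_of_exponent_ge ht0 ht1 (by linarith [hK_ub])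
    have a2 : t ^ (-((31:ℝ)/125)) ≥ (7/10 : ℝ) ^ (-((31:ℝ)/125)) := by
      have := rpow_neg_base_anti (a := t) (b := (7/10 : ℝ)) ht0 (by linarith [h2])
        (c := (31:ℝ)/125) (by norm_num)
      simpa using this
    have a3 : (273121/250000 : ℝ) ≤ (7/10 : ℝ) ^ (-((31:ℝ)/125)) :=
      le_rpow_neg_rat (by norm_num) (by norm_num) 31 125 (by norm_num) (by norm_num)
    linarith
  have e2 : 21/16 * (273121/250000 : ℝ) ≤ KK*(KK-1) * t ^ (KK-2) := by
    have a4 : (21:ℝ)/16 ≤ KK*(KK-1) := by nlinarith [hK_lb]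
    exact mul_le_mul a4 e1 (by norm_num) (le_trans (by norm_num) a4)
  have e3 : Real.cos (π/2*t) ≤ (10481/20000 : ℝ) := by
    have b1 : (102101/100000 : ℝ) ≤ π/2*t := by nlinarith [pi_gt, h1, ht0.le]
    have b2 : Real.cos (π/2*t) ≤ Real.cos (102101/100000 : ℝ) := by
      apply Real.strictAntiOn_cos.antitoneOn ⟨by norm_num, by nlinarith [pi_gt]⟩
        ⟨by nlinarith [pi_gt, ht0.le], by nlinarith [pi_gt, mul_nonneg (sub_nonneg.mpr ht1) pi_pos.le]⟩ b1
    have b3 : Real.cos (102101/100000 : ℝ) ≤ (10481/20000 : ℝ) := by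
      have hb := cos_le_quart (x := (102101/100000 : ℝ)) (by norm_num)
      have : (1:ℝ) - (102101/100000 : ℝ)^2/2 + (102101/100000 : ℝ)^4/24 ≤ (10481/20000 : ℝ) := by norm_num
      linarith
    linarith
  have k1 : 0 ≤ ((10481/20000 : ℝ) - Real.cos (π/2*t)) := by linarith
  have k2 : (π/2)^2 ≤ (3141593/1000000/2:ℝ)^2 := by nlinarith [pi_lt, pi_pos]
  have k3 : (π/2)^2 * Real.cos (π/2*t) ≤ (3141593/1000000/2:ℝ)^2 * (10481/20000 : ℝ) := by
    nlinarith [mul_nonneg (sub_nonneg.mpr k2) hC0,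
      mul_nonneg (show (0:ℝ) ≤ (3141593/1000000/2:ℝ)^2 by norm_num) k1]
  have k4 : (3141593/1000000/2:ℝ)^2 * (10481/20000 : ℝ) < 21/16 * (273121/250000 : ℝ) := by norm_num
  linarith

set_option maxHeartbeats 1000000 in
lemma chi''_nonneg_2 {t : ℝ} (h1 : (7/10 : ℝ) ≤ t) (h2 : t ≤ (39/50 : ℝ)) :
    0 ≤ KK*(KK-1)*t^(KK-2) - (π/2)^2 * Real.cos (π/2*t) := by
  have ht0 : (0:ℝ) < t := by linarith
  have ht1 : t ≤ 1 := by linarith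
  have hC0 : 0 ≤ Real.cos (π/2*t) := Real.cos_nonneg_of_mem_Icc
    ⟨by nlinarith [pi_pos, ht0.le], by nlinarith [mul_nonneg (sub_nonneg.mpr ht1) pi_pos.le]⟩
  have e1 : (212711/200000 : ℝ) ≤ t ^ (KK - 2) := by
    have a1 : t ^ (KK-2) ≥ t ^ (-((31:ℝ)/125)) :=
      Real.rpow_le_rpow_of_exponent_ge ht0 ht1 (by linarith [hK_ub])
    have a2 : t ^ (-((31:ℝ)/125)) ≥ (39/50 : ℝ) ^ (-((31:ℝ)/125)) := by
      have := rpow_neg_base_anti (a := t) (b := (39/50 : ℝ)) ht0 (by linarith [h2])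
        (c := (31:ℝ)/125) (by norm_num)
      simpa using this
    have a3 : (212711/200000 : ℝ) ≤ (39/50 : ℝ) ^ (-((31:ℝ)/125)) :=
      le_rpow_neg_rat (by norm_num) (by norm_num) 31 125 (by norm_num) (by norm_num)
    linarith
  have e2 : 21/16 * (212711/200000 : ℝ) ≤ KK*(KK-1) * t ^ (KK-2) := by
    have a4 : (21:ℝ)/16 ≤ KK*(KK-1) := by nlinarith [hK_lb]
    exact mul_le_mul a4 e1 (by norm_num) (le_trans (by norm_num) a4)
  have e3 : Real.cos (π/2*t) ≤ (1141/2500 : ℝ) := by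
    have b1 : (21991/20000 : ℝ) ≤ π/2*t := by nlinarith [pi_gt, h1, ht0.le]
    have b2 : Real.cos (π/2*t) ≤ Real.cos (21991/20000 : ℝ) := by
      apply Real.strictAntiOn_cos.antitoneOn ⟨by norm_num, by nlinarith [pi_gt]⟩
        ⟨by nlinarith [pi_gt, ht0.le], by nlinarith [pi_gt, mul_nonneg (sub_nonneg.mpr ht1) pi_pos.le]⟩ b1
    have b3 : Real.cos (21991/20000 : ℝ) ≤ (1141/2500 : ℝ) := by
      have hb := cos_le_quart (x := (21991/20000 : ℝ)) (by norm_num)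
      have : (1:ℝ) - (21991/20000 : ℝ)^2/2 + (21991/20000 : ℝ)^4/24 ≤ (1141/2500 : ℝ) := by norm_num
      linarith
    linarith
  have k1 : 0 ≤ ((1141/2500 : ℝ) - Real.cos (π/2*t)) := by linarith
  have k2 : (π/2)^2 ≤ (3141593/1000000/2:ℝ)^2 := by nlinarith [pi_lt, pi_pos]
  have k3 : (π/2)^2 * Real.cos (π/2*t) ≤ (3141593/1000000/2:ℝ)^2 * (1141/2500 : ℝ) := by
    nlinarith [mul_nonneg (sub_nonneg.mpr k2) hC0,
      mul_nonneg (show (0:ℝ) ≤ (3141593/1000000/2:ℝ)^2 by norm_num) k1]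
  have k4 : (3141593/1000000/2:ℝ)^2 * (1141/2500 : ℝ) < 21/16 * (212711/200000 : ℝ) := by norm_num
  linarith

set_option maxHeartbeats 1000000 in
lemma chi''_nonneg_3 {t : ℝ} (h1 : (39/50 : ℝ) ≤ t) (h2 : t ≤ (9/10 : ℝ)) :
    0 ≤ KK*(KK-1)*t^(KK-2) - (π/2)^2 * Real.cos (π/2*t) := by
  have ht0 : (0:ℝ) < t := by linarith
  have ht1 : t ≤ 1 := by linarith
  have hC0 : 0 ≤ Real.cos (π/2*t) := Real.cos_nonneg_of_mem_Icc
    ⟨by nlinarith [pi_pos, ht0.le], by nlinarith [mul_nonneg (sub_nonneg.mpr ht1) pi_pos.le]⟩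
  have e1 : (128309/125000 : ℝ) ≤ t ^ (KK - 2) := by
    have a1 : t ^ (KK-2) ≥ t ^ (-((31:ℝ)/125)) :=
      Real.rpow_le_rpow_of_exponent_ge ht0 ht1 (by linarith [hK_ub])
    have a2 : t ^ (-((31:ℝ)/125)) ≥ (9/10 : ℝ) ^ (-((31:ℝ)/125)) := by
      have := rpow_neg_base_anti (a := t) (b := (9/10 : ℝ)) ht0 (by linarith [h2])
        (c := (31:ℝ)/125) (by norm_num)
      simpa using this
    have a3 : (128309/125000 : ℝ) ≤ (9/10 : ℝ) ^ (-((31:ℝ)/125)) :=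
      le_rpow_neg_rat (by norm_num) (by norm_num) 31 125 (by norm_num) (by norm_num)
    linarith
  have e2 : 21/16 * (128309/125000 : ℝ) ≤ KK*(KK-1) * t ^ (KK-2) := by
    have a4 : (21:ℝ)/16 ≤ KK*(KK-1) := by nlinarith [hK_lb]
    exact mul_le_mul a4 e1 (by norm_num) (le_trans (by norm_num) a4)
  have e3 : Real.cos (π/2*t) ≤ (8583/25000 : ℝ) := by
    have b1 : (61261/50000 : ℝ) ≤ π/2*t := by nlinarith [pi_gt, h1, ht0.le]
    have b2 : Real.cos (π/2*t) ≤ Real.cos (61261/50000 : ℝ) := by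
      apply Real.strictAntiOn_cos.antitoneOn ⟨by norm_num, by nlinarith [pi_gt]⟩
        ⟨by nlinarith [pi_gt, ht0.le], by nlinarith [pi_gt, mul_nonneg (sub_nonneg.mpr ht1) pi_pos.le]⟩ b1
    have b3 : Real.cos (61261/50000 : ℝ) ≤ (8583/25000 : ℝ) := by
      have hb := cos_le_quart (x := (61261/50000 : ℝ)) (by norm_num)
      have : (1:ℝ) - (61261/50000 : ℝ)^2/2 + (61261/50000 : ℝ)^4/24 ≤ (8583/25000 : ℝ) := by norm_num
      linarith
    linarith
  have k1 : 0 ≤ ((8583/25000 : ℝ) - Real.cos (π/2*t)) := by linarith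
  have k2 : (π/2)^2 ≤ (3141593/1000000/2:ℝ)^2 := by nlinarith [pi_lt, pi_pos]
  have k3 : (π/2)^2 * Real.cos (π/2*t) ≤ (3141593/1000000/2:ℝ)^2 * (8583/25000 : ℝ) := by
    nlinarith [mul_nonneg (sub_nonneg.mpr k2) hC0,
      mul_nonneg (show (0:ℝ) ≤ (3141593/1000000/2:ℝ)^2 by norm_num) k1]
  have k4 : (3141593/1000000/2:ℝ)^2 * (8583/25000 : ℝ) < 21/16 * (128309/125000 : ℝ) := by norm_num
  linarith

set_option maxHeartbeats 1000000 in
lemma chi''_nonneg_4 {t : ℝ} (h1 : (9/10 : ℝ) ≤ t) (h2 : t ≤ (1 : ℝ)) :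
    0 ≤ KK*(KK-1)*t^(KK-2) - (π/2)^2 * Real.cos (π/2*t) := by
  have ht0 : (0:ℝ) < t := by linarith
  have ht1 : t ≤ 1 := by linarith
  have hC0 : 0 ≤ Real.cos (π/2*t) := Real.cos_nonneg_of_mem_Icc
    ⟨by nlinarith [pi_pos, ht0.le], by nlinarith [mul_nonneg (sub_nonneg.mpr ht1) pi_pos.le]⟩
  have e1 : (999999/1000000 : ℝ) ≤ t ^ (KK - 2) := by
    have a1 : t ^ (KK-2) ≥ t ^ (-((31:ℝ)/125)) :=
      Real.rpow_le_rpow_of_exponent_ge ht0 ht1 (by linarith [hK_ub])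
    have a2 : t ^ (-((31:ℝ)/125)) ≥ (1 : ℝ) ^ (-((31:ℝ)/125)) := by
      have := rpow_neg_base_anti (a := t) (b := (1 : ℝ)) ht0 (by linarith [h2])
        (c := (31:ℝ)/125) (by norm_num)
      simpa using this
    have a3 : (999999/1000000 : ℝ) ≤ (1 : ℝ) ^ (-((31:ℝ)/125)) :=
      le_rpow_neg_rat (by norm_num) (by norm_num) 31 125 (by norm_num) (by norm_num)
    linarith
  have e2 : 21/16 * (999999/1000000 : ℝ) ≤ KK*(KK-1) * t ^ (KK-2) := by
    have a4 : (21:ℝ)/16 ≤ KK*(KK-1) := by nlinarith [hK_lb]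
    exact mul_le_mul a4 e1 (by norm_num) (le_trans (by norm_num) a4)
  have e3 : Real.cos (π/2*t) ≤ (3343/20000 : ℝ) := by
    have b1 : (141371/100000 : ℝ) ≤ π/2*t := by nlinarith [pi_gt, h1, ht0.le]
    have b2 : Real.cos (π/2*t) ≤ Real.cos (141371/100000 : ℝ) := by
      apply Real.strictAntiOn_cos.antitoneOn ⟨by norm_num, by nlinarith [pi_gt]⟩
        ⟨by nlinarith [pi_gt, ht0.le], by nlinarith [pi_gt, mul_nonneg (sub_nonneg.mpr ht1) pi_pos.le]⟩ b1
    have b3 : Real.cos (141371/100000 : ℝ) ≤ (3343/20000 : ℝ) := by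
      have hb := cos_le_quart (x := (141371/100000 : ℝ)) (by norm_num)
      have : (1:ℝ) - (141371/100000 : ℝ)^2/2 + (141371/100000 : ℝ)^4/24 ≤ (3343/20000 : ℝ) := by norm_num
      linarith
    linarith
  have k1 : 0 ≤ ((3343/20000 : ℝ) - Real.cos (π/2*t)) := by linarith
  have k2 : (π/2)^2 ≤ (3141593/1000000/2:ℝ)^2 := by nlinarith [pi_lt, pi_pos]
  have k3 : (π/2)^2 * Real.cos (π/2*t) ≤ (3141593/1000000/2:ℝ)^2 * (3343/20000 : ℝ) := by
    nlinarith [mul_nonneg (sub_nonneg.mpr k2) hC0,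
      mul_nonneg (show (0:ℝ) ≤ (3141593/1000000/2:ℝ)^2 by norm_num) k1]
  have k4 : (3141593/1000000/2:ℝ)^2 * (3343/20000 : ℝ) < 21/16 * (999999/1000000 : ℝ) := by norm_num
  linarith

lemma chi''_nonneg {t : ℝ} (h1 : (31/50 : ℝ) ≤ t) (h2 : t ≤ (1 : ℝ)) :
    0 ≤ KK*(KK-1)*t^(KK-2) - (π/2)^2 * Real.cos (π/2*t) := by
  rcases le_or_gt t (13/20 : ℝ) with hc0|hc0
  · exact chi''_nonneg_0 h1 hc0
  rcases le_or_gt t (7/10 : ℝ) with hc1|hc1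
  · exact chi''_nonneg_1 hc0.le hc1
  rcases le_or_gt t (39/50 : ℝ) with hc2|hc2
  · exact chi''_nonneg_2 hc1.le hc2
  rcases le_or_gt t (9/10 : ℝ) with hc3|hc3
  · exact chi''_nonneg_3 hc2.le hc3
  exact chi''_nonneg_4 hc3.le h2
lemma chi_pos_small {t : ℝ} (ht : 0 < t) (h2 : t ≤ 7/20) : 0 < chi t := by
  have ht1 : t ≤ 1 := by linarith
  -- t^KK = t^(KK-2) * t^2
  have e0 : t ^ KK = t ^ (KK-2) * t^2 := by
    rw [show KK = (KK-2) + 2 by ring, Real.rpow_add ht, Real.rpow_two]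
    ring
  have e1 : t ^ (-((31:ℝ)/125)) ≤ t ^ (KK-2) :=
    Real.rpow_le_rpow_of_exponent_ge ht ht1 (by linarith [hK_ub])
  have e2 : (7/20 : ℝ) ^ (-((31:ℝ)/125)) ≤ t ^ (-((31:ℝ)/125)) :=
    rpow_neg_base_anti ht h2 (by norm_num)
  have e3 : (12338/10000 : ℝ) ≤ (7/20 : ℝ) ^ (-((31:ℝ)/125)) :=
    le_rpow_neg_rat (by norm_num) (by norm_num) 31 125 (by norm_num) (by norm_num)
  -- cos lower bound
  have e4 : 1 - (π/2*t)^2/2 ≤ Real.cos (π/2*t) := cos_ge_quad (by positivity)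
  have e5 : (π/2*t)^2 ≤ (3141593/2000000:ℝ)^2 * t^2 := by
    have h : (π/2)^2 ≤ (3141593/2000000:ℝ)^2 := by nlinarith [pi_lt, pi_pos]
    nlinarith [mul_nonneg (sub_nonneg.mpr h) (sq_nonneg t)]
  have e6 : (12338/10000 : ℝ) * t^2 ≤ t ^ KK := by
    rw [e0]
    have : (12338/10000 : ℝ) ≤ t ^ (KK-2) := by linarith
    nlinarith [sq_nonneg t]
  have e7 : (3141593/2000000:ℝ)^2 / 2 < 12338/10000 := by norm_num
  unfold chi
  nlinarith [sq_nonneg t, mul_pos ht ht]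

lemma chi_one : chi 1 = 0 := by
  unfold chi
  rw [Real.one_rpow, mul_one, Real.cos_pi_div_two]
  ring

set_option maxHeartbeats 1000000 in
lemma chi_at_62 : chi (31/50 : ℝ) ≤ 0 := by
  unfold chi
  have e1 : (31/50:ℝ) ^ KK ≤ (31/50:ℝ) ^ ((7:ℝ)/4) :=
    Real.rpow_le_rpow_of_exponent_ge (by norm_num) (by norm_num) hK_lb
  have e2 : (31/50:ℝ) ^ ((7:ℝ)/4) ≤ (433199/1000000 : ℝ) :=
    rpow_rat_le (by norm_num) (by norm_num) 7 4 (by norm_num) (by norm_num)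
  have b1 : (97389/100000 : ℝ) ≤ π/2*(31/50 : ℝ) := by nlinarith [pi_gt]
  have b2 : Real.cos (π/2*(31/50:ℝ)) ≤ Real.cos (97389/100000 : ℝ) := by
    apply Real.strictAntiOn_cos.antitoneOn ⟨by norm_num, by nlinarith [pi_gt]⟩
      ⟨by nlinarith [pi_gt], by nlinarith [pi_gt]⟩ b1
  have b3 : Real.cos (97389/100000 : ℝ) ≤ (56330/100000 : ℝ) := by
    have hb := cos_le_quart (x := (97389/100000 : ℝ)) (by norm_num)
    have : (1:ℝ) - (97389/100000 : ℝ)^2/2 + (97389/100000 : ℝ)^4/24 ≤ (56330/100000 : ℝ) := by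
      norm_num
    linarith
  nlinarith

lemma chi_nonpos_tail {t : ℝ} (h1 : (31:ℝ)/50 ≤ t) (h2 : t ≤ 1) : chi t ≤ 0 := by
  have hconv : ConvexOn ℝ (Icc ((31:ℝ)/50) 1) chi := by
    apply convexOn_of_hasDerivWithinAt2_nonneg (convex_Icc _ _) (f' := chi')
      (f'' := fun t => KK*(KK-1)*t^(KK-2) - (π/2)^2 * Real.cos (π/2*t))
    · intro y hy
      exact (chi_hasDeriv (lt_of_lt_of_le (by norm_num) hy.1)).continuousAt.continuousWithinAt
    · intro y hy
      rw [interior_Icc] at hy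
      exact (chi_hasDeriv (lt_trans (by norm_num) hy.1)).hasDerivWithinAt
    · intro y hy
      rw [interior_Icc] at hy
      exact (chi'_hasDeriv (lt_trans (by norm_num) hy.1)).hasDerivWithinAt
    · intro y hy
      rw [interior_Icc] at hy
      exact chi''_nonneg hy.1.le hy.2.le
  have h50 : (0:ℝ) < 19/50 := by norm_num
  have hmem1 : (31/50 : ℝ) ∈ Icc ((31:ℝ)/50) 1 := by constructor <;> norm_num
  have hmem2 : (1 : ℝ) ∈ Icc ((31:ℝ)/50) 1 := by constructor <;> norm_num
  have ha : 0 ≤ (1 - t)/(19/50) := by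
    apply div_nonneg (by linarith) (by norm_num)
  have hb : 0 ≤ (t - 31/50)/(19/50) := by
    apply div_nonneg (by linarith) (by norm_num)
  have hab : (1 - t)/(19/50) + (t - 31/50)/(19/50) = 1 := by field_simp; ring
  have hc := hconv.2 hmem1 hmem2 ha hb hab
  simp only [smul_eq_mul] at hc
  rw [show ((1 - t)/(19/50))*(31/50:ℝ) + ((t - 31/50)/(19/50))*(1:ℝ) = t from by
    field_simp; ring] at hc
  have h62 := chi_at_62
  have h1' := chi_one
  nlinarith [mul_nonneg ha (neg_nonneg.mpr h62)]

lemma chi_SC {s u : ℝ} (hs : 0 < s) (hsu : s ≤ u) (hu : u ≤ 1) (h : chi s ≤ 0) : chi u ≤ 0 := by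
  have hs35 : (7:ℝ)/20 < s := by
    by_contra hcon
    push_neg at hcon
    exact absurd h (not_le.mpr (chi_pos_small hs hcon))
  rcases le_total u (31/50) with h62|h62
  · have hanti : AntitoneOn chi (Icc ((7:ℝ)/20) (31/50)) := by
      apply antitoneOn_of_hasDerivWithinAt_nonpos (convex_Icc _ _) (f' := chi')
      · intro y hy
        exact (chi_hasDeriv (lt_of_lt_of_le (by norm_num) hy.1)).continuousAt.continuousWithinAt
      · intro y hy
        rw [interior_Icc] at hy
        exact (chi_hasDeriv (lt_trans (by norm_num) hy.1)).hasDerivWithinAt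
      · intro y hy
        rw [interior_Icc] at hy
        exact chi'_nonpos hy.1.le hy.2.le
    have := hanti ⟨hs35.le, by linarith⟩ ⟨by linarith, h62⟩ hsu
    linarith
  · exact chi_nonpos_tail h62 hu

lemma psi_hasDeriv (t : ℝ) : HasDerivAt psi (π/2 * chi t) t := by
  have h1 : HasDerivAt (fun y : ℝ => y ^ (KK+1)) ((KK+1) * t ^ KK) t := by
    have h := Real.hasDerivAt_rpow_const (x := t) (p := KK+1) (Or.inr (by linarith [hK_lb]))
    simpa using h
  have h2 := ((hasDerivAt_sin_lin t).sub ((hasDerivAt_id t).const_mul (π/2))).add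
    (h1.const_mul ((π-2)/2))
  have hne : π - 2 ≠ 0 := ne_of_gt pi2pos
  have hident2 : KK * (π-2) = 2 := by
    rw [KK]
    field_simp
  unfold psi chi
  exact h2.congr_deriv (by linear_combination ((t ^ KK)/2) * hident2)
lemma psi_zero : psi 0 = 0 := by
  have h : KK + 1 ≠ 0 := by nlinarith [hK_lb]
  simp [psi, Real.zero_rpow h]

lemma psi_one : psi 1 = 0 := by
  unfold psi
  rw [Real.one_rpow, mul_one, Real.sin_pi_div_two]
  ring

lemma psi_nonneg {t : ℝ} (ht : 0 < t) (ht1 : t ≤ 1) : 0 ≤ psi t := by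
  by_cases H : ∀ s ∈ Ioc (0:ℝ) t, 0 ≤ chi s
  · have hm : MonotoneOn psi (Icc 0 t) := by
      apply monotoneOn_of_hasDerivWithinAt_nonneg (convex_Icc _ _)
        (f' := fun y => π/2 * chi y)
        (fun y _ => (psi_hasDeriv y).continuousAt.continuousWithinAt)
        (fun y _ => (psi_hasDeriv y).hasDerivWithinAt)
      intro y hy
      rw [interior_Icc] at hy
      exact mul_nonneg (by positivity) (H y ⟨hy.1, hy.2.le⟩)
    have h2 := hm (left_mem_Icc.mpr ht.le) (right_mem_Icc.mpr ht.le) ht.le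
    rw [psi_zero] at h2
    exact h2
  · push_neg at H
    obtain ⟨s, hsmem, hs⟩ := H
    have hanti : AntitoneOn psi (Icc t 1) := by
      apply antitoneOn_of_hasDerivWithinAt_nonpos (convex_Icc _ _)
        (f' := fun y => π/2 * chi y)
        (fun y _ => (psi_hasDeriv y).continuousAt.continuousWithinAt)
        (fun y _ => (psi_hasDeriv y).hasDerivWithinAt)
      intro y hy
      rw [interior_Icc] at hy
      exact mul_nonpos_iff.mpr (Or.inl ⟨by positivity,
        chi_SC hsmem.1 (hsmem.2.trans hy.1.le) hy.2.le hs.le⟩)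
    have h2 := hanti (left_mem_Icc.mpr ht1) (right_mem_Icc.mpr ht1) ht1
    rw [psi_one] at h2
    exact h2

lemma lower_main {x : ℝ} (hx : 0 < x) (hx2 : x ≤ π/2) :
    1 - (π-2)/π * (2*x/π) ^ KK ≤ Real.sin x / x := by
  have hπ := pi_pos
  set t := 2*x/π with htdef
  have ht : 0 < t := by positivity
  have ht1 : t ≤ 1 := by
    rw [htdef, div_le_one hπ]; linarith
  have harg : π/2*t = x := by
    rw [htdef]; field_simp
  have hψ := psi_nonneg ht ht1
  unfold psi at hψ
  rw [harg] at hψ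
  have hsplit : t ^ (KK+1) = t ^ KK * t := by rw [Real.rpow_add ht, Real.rpow_one]
  rw [hsplit] at hψ
  rw [le_div_iff₀ hx]
  have hid : (1 - (π-2)/π * t ^ KK) * x = x - (π-2)/2 * (t ^ KK * t) := by
    rw [← harg]
    field_simp
  linarith [hψ, hid.le, hid.ge]
noncomputable def PP : ℝ := π^2/4 - 1
noncomputable def rho (t : ℝ) : ℝ := Real.sin (π/2*t) - t ^ (PP-1)
noncomputable def phi (t : ℝ) : ℝ := t + t/PP - t ^ (PP+1)/PP - Real.sin (π/2*t)
noncomputable def phi' (t : ℝ) : ℝ := 1 + 1/PP - (PP+1)/PP * t ^ PP - π/2 * Real.cos (π/2*t)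

lemma hP_lb : (146:ℝ)/100 ≤ PP := by unfold PP; nlinarith [pi_gt]
lemma hP_ub : PP ≤ 147/100 := by unfold PP; nlinarith [pi_lt, pi_pos]
lemma hP_pos : 0 < PP := by nlinarith [hP_lb]
lemma hP_id : PP + 1 = (π/2)^2 := by unfold PP; ring

lemma phi_hasDeriv (t : ℝ) : HasDerivAt phi (phi' t) t := by
  have h1 : HasDerivAt (fun y : ℝ => y ^ (PP+1)) ((PP+1) * t ^ PP) t := by
    have h := Real.hasDerivAt_rpow_const (x := t) (p := PP+1) (Or.inr (by nlinarith [hP_lb]))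
    simpa using h
  have h2 := (((hasDerivAt_id t).add ((hasDerivAt_id t).div_const PP)).sub
    (h1.div_const PP)).sub (hasDerivAt_sin_lin t)
  unfold phi phi'
  exact h2.congr_deriv (by ring)

lemma phi'_hasDeriv {t : ℝ} (ht : 0 < t) : HasDerivAt phi' ((π/2)^2 * rho t) t := by
  have h1 : HasDerivAt (fun y : ℝ => y ^ PP) (PP * t ^ (PP-1)) t :=
    Real.hasDerivAt_rpow_const (Or.inl ht.ne')
  have h2 := (((hasDerivAt_const t (1 + 1/PP)).sub (h1.const_mul ((PP+1)/PP))).sub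
    ((hasDerivAt_cos_lin t).const_mul (π/2)))
  unfold phi' rho
  have hne : PP ≠ 0 := ne_of_gt hP_pos
  have h3 : (PP+1)/PP*(PP*t^(PP-1)) = (PP+1)*t^(PP-1) := by field_simp
  exact h2.congr_deriv (by rw [h3]; linear_combination -(t^(PP-1)) * hP_id)

lemma rho_hasDeriv {t : ℝ} (ht : 0 < t) :
    HasDerivAt rho (π/2 * Real.cos (π/2*t) - (PP-1)*t^(PP-2)) t := by
  have h1 : HasDerivAt (fun y : ℝ => y ^ (PP-1)) ((PP-1) * t ^ (PP-1-1)) t :=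
    Real.hasDerivAt_rpow_const (Or.inl ht.ne')
  have h2 := (hasDerivAt_sin_lin t).sub h1
  unfold rho
  exact h2.congr_deriv (by rw [show PP-1-1 = PP-2 by ring])

lemma rho_one : rho 1 = 0 := by
  unfold rho
  rw [Real.one_rpow, mul_one, Real.sin_pi_div_two]
  ring

lemma rho_neg_small {t : ℝ} (ht : 0 < t) (h2 : t ≤ 21/50) : rho t ≤ 0 := by
  have ht1 : t ≤ 1 := by linarith
  have e0 : Real.sin (π/2*t) ≤ π/2*t := Real.sin_le (by positivity)
  have e1 : t ^ (-((53:ℝ)/100)) ≤ t ^ (PP-2) :=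
    Real.rpow_le_rpow_of_exponent_ge ht ht1 (by linarith [hP_ub])
  have e2 : (21/50 : ℝ) ^ (-((53:ℝ)/100)) ≤ t ^ (-((53:ℝ)/100)) :=
    rpow_neg_base_anti ht h2 (by norm_num)
  have e3 : (1575/1000 : ℝ) ≤ (21/50 : ℝ) ^ (-((53:ℝ)/100)) :=
    le_rpow_neg_rat (by norm_num) (by norm_num) 53 100 (by norm_num) (by norm_num)
  have e4 : π/2 ≤ t ^ (PP-2) := by nlinarith [pi_lt]
  have e5 : t ^ (PP-1) = t ^ (PP-2) * t := by
    rw [show PP-1 = (PP-2)+1 by ring, Real.rpow_add ht, Real.rpow_one]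
  unfold rho
  rw [e5]
  nlinarith [mul_nonneg (sub_nonneg.mpr e4) ht.le]

lemma rho_mono : MonotoneOn rho (Icc ((21:ℝ)/50) (3/5)) := by
  apply monotoneOn_of_hasDerivWithinAt_nonneg (convex_Icc _ _)
    (f' := fun y => π/2 * Real.cos (π/2*y) - (PP-1)*y^(PP-2))
  · intro y hy
    exact (rho_hasDeriv (lt_of_lt_of_le (by norm_num) hy.1)).continuousAt.continuousWithinAt
  · intro y hy
    rw [interior_Icc] at hy
    exact (rho_hasDeriv (lt_trans (by norm_num) hy.1)).hasDerivWithinAt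
  · intro y hy
    rw [interior_Icc] at hy
    obtain ⟨hy1, hy2⟩ := hy
    have ht0 : (0:ℝ) < y := by linarith
    have ht1 : y ≤ 1 := by linarith
    -- power side upper bound
    have e1 : y ^ (PP-2) ≤ y ^ (-((11:ℝ)/20)) :=
      Real.rpow_le_rpow_of_exponent_ge ht0 ht1 (by linarith [hP_lb])
    have e2 : y ^ (-((11:ℝ)/20)) ≤ (21/50 : ℝ) ^ (-((11:ℝ)/20)) :=
      rpow_neg_base_anti (by norm_num) hy1.le (by norm_num)
    have e3 : (21/50 : ℝ) ^ (-((11:ℝ)/20)) ≤ (16115/10000 : ℝ) :=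
      rpow_neg_rat_le (by norm_num) (by norm_num) 11 20 (by norm_num) (by norm_num)
    have e4 : (PP-1) * y^(PP-2) ≤ (47/100) * (16115/10000 : ℝ) := by
      apply mul_le_mul (by linarith [hP_ub]) (by linarith)
        (le_of_lt (Real.rpow_pos_of_pos ht0 _)) (by norm_num)
    -- cosine side lower bound
    have b1 : π/2*y ≤ (11781/12500 : ℝ) := by nlinarith [pi_lt, ht0.le]
    have b2 : Real.cos (11781/12500 : ℝ) ≤ Real.cos (π/2*y) := by
      apply Real.strictAntiOn_cos.antitoneOn
        ⟨by positivity, by nlinarith [pi_gt, mul_nonneg (sub_nonneg.mpr ht1) pi_pos.le]⟩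
        ⟨by norm_num, by nlinarith [pi_gt]⟩ b1
    have b3 : (7347/12500 : ℝ) ≤ Real.cos (11781/12500 : ℝ) := by
      have hb := cos_ge_sext (x := (11781/12500 : ℝ)) (by norm_num)
      have : (7347/12500 : ℝ) ≤ 1 - (11781/12500 : ℝ)^2/2 + (11781/12500 : ℝ)^4/24
          - (11781/12500 : ℝ)^6/720 := by norm_num
      linarith
    have b4 : (3141592/2000000 : ℝ) * (7347/12500) ≤ π/2 * Real.cos (π/2*y) := by
      have k1 : (0:ℝ) ≤ π/2 - 3141592/2000000 := by nlinarith [pi_gt]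
      have k2 : (0:ℝ) ≤ Real.cos (π/2*y) - 7347/12500 := by linarith
      nlinarith [mul_nonneg k1 (le_trans (by norm_num) (le_trans b3 b2)),
        mul_nonneg (show (0:ℝ) ≤ 3141592/2000000 by norm_num) k2]
    have : (47/100) * (16115/10000 : ℝ) < (3141592/2000000 : ℝ) * (7347/12500) := by norm_num
    linarith

lemma rho_anti : AntitoneOn rho (Icc ((9:ℝ)/10) 1) := by
  apply antitoneOn_of_hasDerivWithinAt_nonpos (convex_Icc _ _)
    (f' := fun y => π/2 * Real.cos (π/2*y) - (PP-1)*y^(PP-2))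
  · intro y hy
    exact (rho_hasDeriv (lt_of_lt_of_le (by norm_num) hy.1)).continuousAt.continuousWithinAt
  · intro y hy
    rw [interior_Icc] at hy
    exact (rho_hasDeriv (lt_trans (by norm_num) hy.1)).hasDerivWithinAt
  · intro y hy
    rw [interior_Icc] at hy
    obtain ⟨hy1, hy2⟩ := hy
    have ht0 : (0:ℝ) < y := by linarith
    have ht1 : y ≤ 1 := hy2.le
    have e1 : y ^ ((0:ℝ)) ≤ y ^ (PP-2) :=
      Real.rpow_le_rpow_of_exponent_ge ht0 ht1 (by linarith [hP_ub])
    rw [Real.rpow_zero] at e1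
    have e4 : (46/100 : ℝ) ≤ (PP-1) * y^(PP-2) := by
      nlinarith [hP_lb, mul_nonneg (show (0:ℝ) ≤ PP - 1 - 46/100 by nlinarith [hP_lb])
        (show (0:ℝ) ≤ y ^ (PP-2) - 1 by linarith)]
    -- cosine upper bound
    have b1 : (141371/100000 : ℝ) ≤ π/2*y := by nlinarith [pi_gt, ht0.le]
    have b2 : Real.cos (π/2*y) ≤ Real.cos (141371/100000 : ℝ) := by
      apply Real.strictAntiOn_cos.antitoneOn
        ⟨by norm_num, by nlinarith [pi_gt]⟩
        ⟨by positivity, by nlinarith [pi_gt, mul_nonneg (sub_nonneg.mpr ht1) pi_pos.le]⟩ b1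
    have b3 : Real.cos (141371/100000 : ℝ) ≤ (3343/20000 : ℝ) := by
      have hb := cos_le_quart (x := (141371/100000 : ℝ)) (by norm_num)
      have : (1:ℝ) - (141371/100000 : ℝ)^2/2 + (141371/100000 : ℝ)^4/24 ≤ (3343/20000 : ℝ) := by
        norm_num
      linarith
    have hC0 : 0 ≤ Real.cos (π/2*y) := Real.cos_nonneg_of_mem_Icc
      ⟨by nlinarith [pi_pos, ht0.le], by nlinarith [mul_nonneg (sub_nonneg.mpr ht1) pi_pos.le]⟩
    have b4 : π/2 * Real.cos (π/2*y) ≤ (3141593/2000000 : ℝ) * (3343/20000) := by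
      have k1 : (0:ℝ) ≤ 3141593/2000000 - π/2 := by nlinarith [pi_lt]
      nlinarith [mul_nonneg k1 hC0,
        mul_nonneg (show (0:ℝ) ≤ (3141593/2000000:ℝ) by norm_num)
          (sub_nonneg.mpr (le_trans b2 b3))]
    have : (3141593/2000000 : ℝ) * (3343/20000) < 46/100 := by norm_num
    linarith
set_option maxHeartbeats 1000000 in
lemma rho_pt_0 {t : ℝ} (h1 : (3/5 : ℝ) ≤ t) (h2 : t ≤ (61/100 : ℝ)) : 0 ≤ rho t := by
  have ht0 : (0:ℝ) < t := by linarith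
  have ht1 : t ≤ 1 := by linarith
  have e1 : t ^ (PP - 1) ≤ (398311/500000 : ℝ) := by
    have a1 : t ^ (PP-1) ≤ t ^ ((23:ℝ)/50) :=
      Real.rpow_le_rpow_of_exponent_ge ht0 ht1 (by linarith [hP_lb])
    have a2 : t ^ ((23:ℝ)/50) ≤ (61/100 : ℝ) ^ ((23:ℝ)/50) :=
      Real.rpow_le_rpow ht0.le (by linarith) (by norm_num)
    have a3 : (61/100 : ℝ) ^ ((23:ℝ)/50) ≤ (398311/500000 : ℝ) :=
      rpow_rat_le (by norm_num) (by norm_num) 23 50 (by norm_num) (by norm_num)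
    linarith
  have e3 : (80901/100000 : ℝ) ≤ Real.sin (π/2*t) := by
    have b1 : (94247/100000 : ℝ) ≤ π/2*t := by nlinarith [pi_gt, ht0.le]
    have b2 : Real.sin (94247/100000 : ℝ) ≤ Real.sin (π/2*t) := by
      apply Real.strictMonoOn_sin.monotoneOn ⟨by nlinarith [pi_gt], by nlinarith [pi_gt]⟩
        ⟨by nlinarith [pi_gt, ht0.le], by nlinarith [pi_gt, mul_nonneg (sub_nonneg.mpr ht1) pi_pos.le]⟩ b1
    have b3 : (80901/100000 : ℝ) ≤ Real.sin (94247/100000 : ℝ) := by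
      have hb := sin_ge_sept (x := (94247/100000 : ℝ)) (by norm_num)
      have : (80901/100000 : ℝ) ≤ (94247/100000 : ℝ) - (94247/100000 : ℝ)^3/6 + (94247/100000 : ℝ)^5/120 - (94247/100000 : ℝ)^7/5040 := by norm_num
      linarith
    linarith
  have : (398311/500000 : ℝ) ≤ (80901/100000 : ℝ) := by norm_num
  unfold rho
  linarith

set_option maxHeartbeats 1000000 in
lemma rho_pt_1 {t : ℝ} (h1 : (61/100 : ℝ) ≤ t) (h2 : t ≤ (63/100 : ℝ)) : 0 ≤ rho t := by
  have ht0 : (0:ℝ) < t := by linarith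
  have ht1 : t ≤ 1 := by linarith
  have e1 : t ^ (PP - 1) ≤ (202133/250000 : ℝ) := by
    have a1 : t ^ (PP-1) ≤ t ^ ((23:ℝ)/50) :=
      Real.rpow_le_rpow_of_exponent_ge ht0 ht1 (by linarith [hP_lb])
    have a2 : t ^ ((23:ℝ)/50) ≤ (63/100 : ℝ) ^ ((23:ℝ)/50) :=
      Real.rpow_le_rpow ht0.le (by linarith) (by norm_num)
    have a3 : (63/100 : ℝ) ^ ((23:ℝ)/50) ≤ (202133/250000 : ℝ) :=
      rpow_rat_le (by norm_num) (by norm_num) 23 50 (by norm_num) (by norm_num)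
    linarith
  have e3 : (40907/50000 : ℝ) ≤ Real.sin (π/2*t) := by
    have b1 : (47909/50000 : ℝ) ≤ π/2*t := by nlinarith [pi_gt, ht0.le]
    have b2 : Real.sin (47909/50000 : ℝ) ≤ Real.sin (π/2*t) := by
      apply Real.strictMonoOn_sin.monotoneOn ⟨by nlinarith [pi_gt], by nlinarith [pi_gt]⟩
        ⟨by nlinarith [pi_gt, ht0.le], by nlinarith [pi_gt, mul_nonneg (sub_nonneg.mpr ht1) pi_pos.le]⟩ b1
    have b3 : (40907/50000 : ℝ) ≤ Real.sin (47909/50000 : ℝ) := by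
      have hb := sin_ge_sept (x := (47909/50000 : ℝ)) (by norm_num)
      have : (40907/50000 : ℝ) ≤ (47909/50000 : ℝ) - (47909/50000 : ℝ)^3/6 + (47909/50000 : ℝ)^5/120 - (47909/50000 : ℝ)^7/5040 := by norm_num
      linarith
    linarith
  have : (202133/250000 : ℝ) ≤ (40907/50000 : ℝ) := by norm_num
  unfold rho
  linarith

set_option maxHeartbeats 1000000 in
lemma rho_pt_2 {t : ℝ} (h1 : (63/100 : ℝ) ≤ t) (h2 : t ≤ (33/50 : ℝ)) : 0 ≤ rho t := by
  have ht0 : (0:ℝ) < t := by linarith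
  have ht1 : t ≤ 1 := by linarith
  have e1 : t ^ (PP - 1) ≤ (826021/1000000 : ℝ) := by
    have a1 : t ^ (PP-1) ≤ t ^ ((23:ℝ)/50) :=
      Real.rpow_le_rpow_of_exponent_ge ht0 ht1 (by linarith [hP_lb])
    have a2 : t ^ ((23:ℝ)/50) ≤ (33/50 : ℝ) ^ ((23:ℝ)/50) :=
      Real.rpow_le_rpow ht0.le (by linarith) (by norm_num)
    have a3 : (33/50 : ℝ) ^ ((23:ℝ)/50) ≤ (826021/1000000 : ℝ) :=
      rpow_rat_le (by norm_num) (by norm_num) 23 50 (by norm_num) (by norm_num)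
    linarith
  have e3 : (4179/5000 : ℝ) ≤ Real.sin (π/2*t) := by
    have b1 : (1237/1250 : ℝ) ≤ π/2*t := by nlinarith [pi_gt, ht0.le]
    have b2 : Real.sin (1237/1250 : ℝ) ≤ Real.sin (π/2*t) := by
      apply Real.strictMonoOn_sin.monotoneOn ⟨by nlinarith [pi_gt], by nlinarith [pi_gt]⟩
        ⟨by nlinarith [pi_gt, ht0.le], by nlinarith [pi_gt, mul_nonneg (sub_nonneg.mpr ht1) pi_pos.le]⟩ b1
    have b3 : (4179/5000 : ℝ) ≤ Real.sin (1237/1250 : ℝ) := by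
      have hb := sin_ge_sept (x := (1237/1250 : ℝ)) (by norm_num)
      have : (4179/5000 : ℝ) ≤ (1237/1250 : ℝ) - (1237/1250 : ℝ)^3/6 + (1237/1250 : ℝ)^5/120 - (1237/1250 : ℝ)^7/5040 := by norm_num
      linarith
    linarith
  have : (826021/1000000 : ℝ) ≤ (4179/5000 : ℝ) := by norm_num
  unfold rho
  linarith

set_option maxHeartbeats 1000000 in
lemma rho_pt_3 {t : ℝ} (h1 : (33/50 : ℝ) ≤ t) (h2 : t ≤ (69/100 : ℝ)) : 0 ≤ rho t := by
  have ht0 : (0:ℝ) < t := by linarith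
  have ht1 : t ≤ 1 := by linarith
  have e1 : t ^ (PP - 1) ≤ (168617/200000 : ℝ) := by
    have a1 : t ^ (PP-1) ≤ t ^ ((23:ℝ)/50) :=
      Real.rpow_le_rpow_of_exponent_ge ht0 ht1 (by linarith [hP_lb])
    have a2 : t ^ ((23:ℝ)/50) ≤ (69/100 : ℝ) ^ ((23:ℝ)/50) :=
      Real.rpow_le_rpow ht0.le (by linarith) (by norm_num)
    have a3 : (69/100 : ℝ) ^ ((23:ℝ)/50) ≤ (168617/200000 : ℝ) :=
      rpow_rat_le (by norm_num) (by norm_num) 23 50 (by norm_num) (by norm_num)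
    linarith
  have e3 : (86073/100000 : ℝ) ≤ Real.sin (π/2*t) := by
    have b1 : (12959/12500 : ℝ) ≤ π/2*t := by nlinarith [pi_gt, ht0.le]
    have b2 : Real.sin (12959/12500 : ℝ) ≤ Real.sin (π/2*t) := by
      apply Real.strictMonoOn_sin.monotoneOn ⟨by nlinarith [pi_gt], by nlinarith [pi_gt]⟩
        ⟨by nlinarith [pi_gt, ht0.le], by nlinarith [pi_gt, mul_nonneg (sub_nonneg.mpr ht1) pi_pos.le]⟩ b1
    have b3 : (86073/100000 : ℝ) ≤ Real.sin (12959/12500 : ℝ) := by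
      have hb := sin_ge_sept (x := (12959/12500 : ℝ)) (by norm_num)
      have : (86073/100000 : ℝ) ≤ (12959/12500 : ℝ) - (12959/12500 : ℝ)^3/6 + (12959/12500 : ℝ)^5/120 - (12959/12500 : ℝ)^7/5040 := by norm_num
      linarith
    linarith
  have : (168617/200000 : ℝ) ≤ (86073/100000 : ℝ) := by norm_num
  unfold rho
  linarith

set_option maxHeartbeats 1000000 in
lemma rho_pt_4 {t : ℝ} (h1 : (69/100 : ℝ) ≤ t) (h2 : t ≤ (18/25 : ℝ)) : 0 ≤ rho t := by
  have ht0 : (0:ℝ) < t := by linarith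
  have ht1 : t ≤ 1 := by linarith
  have e1 : t ^ (PP - 1) ≤ (859753/1000000 : ℝ) := by
    have a1 : t ^ (PP-1) ≤ t ^ ((23:ℝ)/50) :=
      Real.rpow_le_rpow_of_exponent_ge ht0 ht1 (by linarith [hP_lb])
    have a2 : t ^ ((23:ℝ)/50) ≤ (18/25 : ℝ) ^ ((23:ℝ)/50) :=
      Real.rpow_le_rpow ht0.le (by linarith) (by norm_num)
    have a3 : (18/25 : ℝ) ^ ((23:ℝ)/50) ≤ (859753/1000000 : ℝ) :=
      rpow_rat_le (by norm_num) (by norm_num) 23 50 (by norm_num) (by norm_num)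
    linarith
  have e3 : (707/800 : ℝ) ≤ Real.sin (π/2*t) := by
    have b1 : (3387/3125 : ℝ) ≤ π/2*t := by nlinarith [pi_gt, ht0.le]
    have b2 : Real.sin (3387/3125 : ℝ) ≤ Real.sin (π/2*t) := by
      apply Real.strictMonoOn_sin.monotoneOn ⟨by nlinarith [pi_gt], by nlinarith [pi_gt]⟩
        ⟨by nlinarith [pi_gt, ht0.le], by nlinarith [pi_gt, mul_nonneg (sub_nonneg.mpr ht1) pi_pos.le]⟩ b1
    have b3 : (707/800 : ℝ) ≤ Real.sin (3387/3125 : ℝ) := by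
      have hb := sin_ge_sept (x := (3387/3125 : ℝ)) (by norm_num)
      have : (707/800 : ℝ) ≤ (3387/3125 : ℝ) - (3387/3125 : ℝ)^3/6 + (3387/3125 : ℝ)^5/120 - (3387/3125 : ℝ)^7/5040 := by norm_num
      linarith
    linarith
  have : (859753/1000000 : ℝ) ≤ (707/800 : ℝ) := by norm_num
  unfold rho
  linarith

set_option maxHeartbeats 1000000 in
lemma rho_pt_5 {t : ℝ} (h1 : (18/25 : ℝ) ≤ t) (h2 : t ≤ (19/25 : ℝ)) : 0 ≤ rho t := by
  have ht0 : (0:ℝ) < t := by linarith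
  have ht1 : t ≤ 1 := by linarith
  have e1 : t ^ (PP - 1) ≤ (220351/250000 : ℝ) := by
    have a1 : t ^ (PP-1) ≤ t ^ ((23:ℝ)/50) :=
      Real.rpow_le_rpow_of_exponent_ge ht0 ht1 (by linarith [hP_lb])
    have a2 : t ^ ((23:ℝ)/50) ≤ (19/25 : ℝ) ^ ((23:ℝ)/50) :=
      Real.rpow_le_rpow ht0.le (by linarith) (by norm_num)
    have a3 : (19/25 : ℝ) ^ ((23:ℝ)/50) ≤ (220351/250000 : ℝ) :=
      rpow_rat_le (by norm_num) (by norm_num) 23 50 (by norm_num) (by norm_num)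
    linarith
  have e3 : (90481/100000 : ℝ) ≤ Real.sin (π/2*t) := by
    have b1 : (113097/100000 : ℝ) ≤ π/2*t := by nlinarith [pi_gt, ht0.le]
    have b2 : Real.sin (113097/100000 : ℝ) ≤ Real.sin (π/2*t) := by
      apply Real.strictMonoOn_sin.monotoneOn ⟨by nlinarith [pi_gt], by nlinarith [pi_gt]⟩
        ⟨by nlinarith [pi_gt, ht0.le], by nlinarith [pi_gt, mul_nonneg (sub_nonneg.mpr ht1) pi_pos.le]⟩ b1
    have b3 : (90481/100000 : ℝ) ≤ Real.sin (113097/100000 : ℝ) := by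
      have hb := sin_ge_sept (x := (113097/100000 : ℝ)) (by norm_num)
      have : (90481/100000 : ℝ) ≤ (113097/100000 : ℝ) - (113097/100000 : ℝ)^3/6 + (113097/100000 : ℝ)^5/120 - (113097/100000 : ℝ)^7/5040 := by norm_num
      linarith
    linarith
  have : (220351/250000 : ℝ) ≤ (90481/100000 : ℝ) := by norm_num
  unfold rho
  linarith

set_option maxHeartbeats 1000000 in
lemma rho_pt_6 {t : ℝ} (h1 : (19/25 : ℝ) ≤ t) (h2 : t ≤ (81/100 : ℝ)) : 0 ≤ rho t := by
  have ht0 : (0:ℝ) < t := by linarith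
  have ht1 : t ≤ 1 := by linarith
  have e1 : t ^ (PP - 1) ≤ (45381/50000 : ℝ) := by
    have a1 : t ^ (PP-1) ≤ t ^ ((23:ℝ)/50) :=
      Real.rpow_le_rpow_of_exponent_ge ht0 ht1 (by linarith [hP_lb])
    have a2 : t ^ ((23:ℝ)/50) ≤ (81/100 : ℝ) ^ ((23:ℝ)/50) :=
      Real.rpow_le_rpow ht0.le (by linarith) (by norm_num)
    have a3 : (81/100 : ℝ) ^ ((23:ℝ)/50) ≤ (45381/50000 : ℝ) :=
      rpow_rat_le (by norm_num) (by norm_num) 23 50 (by norm_num) (by norm_num)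
    linarith
  have e3 : (5811/6250 : ℝ) ≤ Real.sin (π/2*t) := by
    have b1 : (5969/5000 : ℝ) ≤ π/2*t := by nlinarith [pi_gt, ht0.le]
    have b2 : Real.sin (5969/5000 : ℝ) ≤ Real.sin (π/2*t) := by
      apply Real.strictMonoOn_sin.monotoneOn ⟨by nlinarith [pi_gt], by nlinarith [pi_gt]⟩
        ⟨by nlinarith [pi_gt, ht0.le], by nlinarith [pi_gt, mul_nonneg (sub_nonneg.mpr ht1) pi_pos.le]⟩ b1
    have b3 : (5811/6250 : ℝ) ≤ Real.sin (5969/5000 : ℝ) := by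
      have hb := sin_ge_sept (x := (5969/5000 : ℝ)) (by norm_num)
      have : (5811/6250 : ℝ) ≤ (5969/5000 : ℝ) - (5969/5000 : ℝ)^3/6 + (5969/5000 : ℝ)^5/120 - (5969/5000 : ℝ)^7/5040 := by norm_num
      linarith
    linarith
  have : (45381/50000 : ℝ) ≤ (5811/6250 : ℝ) := by norm_num
  unfold rho
  linarith

set_option maxHeartbeats 1000000 in
lemma rho_pt_7 {t : ℝ} (h1 : (81/100 : ℝ) ≤ t) (h2 : t ≤ (43/50 : ℝ)) : 0 ≤ rho t := by
  have ht0 : (0:ℝ) < t := by linarith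
  have ht1 : t ≤ 1 := by linarith
  have e1 : t ^ (PP - 1) ≤ (37319/40000 : ℝ) := by
    have a1 : t ^ (PP-1) ≤ t ^ ((23:ℝ)/50) :=
      Real.rpow_le_rpow_of_exponent_ge ht0 ht1 (by linarith [hP_lb])
    have a2 : t ^ ((23:ℝ)/50) ≤ (43/50 : ℝ) ^ ((23:ℝ)/50) :=
      Real.rpow_le_rpow ht0.le (by linarith) (by norm_num)
    have a3 : (43/50 : ℝ) ^ ((23:ℝ)/50) ≤ (37319/40000 : ℝ) :=
      rpow_rat_le (by norm_num) (by norm_num) 23 50 (by norm_num) (by norm_num)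
    linarith
  have e3 : (11947/12500 : ℝ) ≤ Real.sin (π/2*t) := by
    have b1 : (63617/50000 : ℝ) ≤ π/2*t := by nlinarith [pi_gt, ht0.le]
    have b2 : Real.sin (63617/50000 : ℝ) ≤ Real.sin (π/2*t) := by
      apply Real.strictMonoOn_sin.monotoneOn ⟨by nlinarith [pi_gt], by nlinarith [pi_gt]⟩
        ⟨by nlinarith [pi_gt, ht0.le], by nlinarith [pi_gt, mul_nonneg (sub_nonneg.mpr ht1) pi_pos.le]⟩ b1
    have b3 : (11947/12500 : ℝ) ≤ Real.sin (63617/50000 : ℝ) := by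
      have hb := sin_ge_sept (x := (63617/50000 : ℝ)) (by norm_num)
      have : (11947/12500 : ℝ) ≤ (63617/50000 : ℝ) - (63617/50000 : ℝ)^3/6 + (63617/50000 : ℝ)^5/120 - (63617/50000 : ℝ)^7/5040 := by norm_num
      linarith
    linarith
  have : (37319/40000 : ℝ) ≤ (11947/12500 : ℝ) := by norm_num
  unfold rho
  linarith

set_option maxHeartbeats 1000000 in
lemma rho_pt_8 {t : ℝ} (h1 : (43/50 : ℝ) ≤ t) (h2 : t ≤ (9/10 : ℝ)) : 0 ≤ rho t := by
  have ht0 : (0:ℝ) < t := by linarith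
  have ht1 : t ≤ 1 := by linarith
  have e1 : t ^ (PP - 1) ≤ (952691/1000000 : ℝ) := by
    have a1 : t ^ (PP-1) ≤ t ^ ((23:ℝ)/50) :=
      Real.rpow_le_rpow_of_exponent_ge ht0 ht1 (by linarith [hP_lb])
    have a2 : t ^ ((23:ℝ)/50) ≤ (9/10 : ℝ) ^ ((23:ℝ)/50) :=
      Real.rpow_le_rpow ht0.le (by linarith) (by norm_num)
    have a3 : (9/10 : ℝ) ^ ((23:ℝ)/50) ≤ (952691/1000000 : ℝ) :=
      rpow_rat_le (by norm_num) (by norm_num) 23 50 (by norm_num) (by norm_num)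
    linarith
  have e3 : (97587/100000 : ℝ) ≤ Real.sin (π/2*t) := by
    have b1 : (8443/6250 : ℝ) ≤ π/2*t := by nlinarith [pi_gt, ht0.le]
    have b2 : Real.sin (8443/6250 : ℝ) ≤ Real.sin (π/2*t) := by
      apply Real.strictMonoOn_sin.monotoneOn ⟨by nlinarith [pi_gt], by nlinarith [pi_gt]⟩
        ⟨by nlinarith [pi_gt, ht0.le], by nlinarith [pi_gt, mul_nonneg (sub_nonneg.mpr ht1) pi_pos.le]⟩ b1
    have b3 : (97587/100000 : ℝ) ≤ Real.sin (8443/6250 : ℝ) := by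
      have hb := sin_ge_sept (x := (8443/6250 : ℝ)) (by norm_num)
      have : (97587/100000 : ℝ) ≤ (8443/6250 : ℝ) - (8443/6250 : ℝ)^3/6 + (8443/6250 : ℝ)^5/120 - (8443/6250 : ℝ)^7/5040 := by norm_num
      linarith
    linarith
  have : (952691/1000000 : ℝ) ≤ (97587/100000 : ℝ) := by norm_num
  unfold rho
  linarith

lemma rho_pt {t : ℝ} (h1 : (3/5 : ℝ) ≤ t) (h2 : t ≤ (9/10 : ℝ)) : 0 ≤ rho t := by
  rcases le_or_gt t (61/100 : ℝ) with hc0|hc0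
  · exact rho_pt_0 h1 hc0
  rcases le_or_gt t (63/100 : ℝ) with hc1|hc1
  · exact rho_pt_1 hc0.le hc1
  rcases le_or_gt t (33/50 : ℝ) with hc2|hc2
  · exact rho_pt_2 hc1.le hc2
  rcases le_or_gt t (69/100 : ℝ) with hc3|hc3
  · exact rho_pt_3 hc2.le hc3
  rcases le_or_gt t (18/25 : ℝ) with hc4|hc4
  · exact rho_pt_4 hc3.le hc4
  rcases le_or_gt t (19/25 : ℝ) with hc5|hc5
  · exact rho_pt_5 hc4.le hc5
  rcases le_or_gt t (81/100 : ℝ) with hc6|hc6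
  · exact rho_pt_6 hc5.le hc6
  rcases le_or_gt t (43/50 : ℝ) with hc7|hc7
  · exact rho_pt_7 hc6.le hc7
  exact rho_pt_8 hc7.le h2
lemma rho_SC {w v : ℝ} (hw : 0 < w) (hwv : w ≤ v) (hv : v ≤ 1) (h : 0 < rho w) : 0 ≤ rho v := by
  have hw42 : (21:ℝ)/50 < w := by
    by_contra hcon
    push_neg at hcon
    exact absurd h (not_lt.mpr (rho_neg_small hw hcon))
  rcases le_total v (3/5) with h35|h35
  · have := rho_mono ⟨hw42.le, by linarith⟩ ⟨by linarith, h35⟩ hwv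
    linarith
  rcases le_total v (9/10) with h910|h910
  · exact rho_pt h35 h910
  · have := rho_anti ⟨h910, hv⟩ ⟨by norm_num, le_refl 1⟩ hv
    rw [rho_one] at this
    linarith

lemma phi'_one : phi' 1 = 0 := by
  unfold phi'
  rw [Real.one_rpow, show π/2*(1:ℝ) = π/2 by ring, Real.cos_pi_div_two]
  have hne : PP ≠ 0 := ne_of_gt hP_pos
  field_simp
  ring

lemma phi_zero : phi 0 = 0 := by
  have h : PP + 1 ≠ 0 := by nlinarith [hP_lb]
  simp [phi, Real.zero_rpow h]

lemma phi_one : phi 1 = 0 := by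
  unfold phi
  rw [Real.one_rpow, mul_one, Real.sin_pi_div_two]
  ring

lemma phi'_SC {s u : ℝ} (hs : 0 < s) (hsu : s ≤ u) (hu : u ≤ 1) (h : phi' s < 0) :
    phi' u ≤ 0 := by
  by_cases Hv : ∀ v ∈ Icc s u, rho v ≤ 0
  · have hanti : AntitoneOn phi' (Icc s u) := by
      apply antitoneOn_of_hasDerivWithinAt_nonpos (convex_Icc _ _)
        (f' := fun y => (π/2)^2 * rho y)
      · intro y hy
        exact (phi'_hasDeriv (lt_of_lt_of_le hs hy.1)).continuousAt.continuousWithinAt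
      · intro y hy
        rw [interior_Icc] at hy
        exact (phi'_hasDeriv (lt_trans hs hy.1)).hasDerivWithinAt
      · intro y hy
        rw [interior_Icc] at hy
        exact mul_nonpos_iff.mpr (Or.inl ⟨by positivity, Hv y ⟨hy.1.le, hy.2.le⟩⟩)
    have h2 := hanti (left_mem_Icc.mpr hsu) (right_mem_Icc.mpr hsu) hsu
    linarith
  · push_neg at Hv
    obtain ⟨w, hwmem, hw⟩ := Hv
    have hw0 : 0 < w := lt_of_lt_of_le hs hwmem.1
    have hmono : MonotoneOn phi' (Icc u 1) := by
      apply monotoneOn_of_hasDerivWithinAt_nonneg (convex_Icc _ _)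
        (f' := fun y => (π/2)^2 * rho y)
      · intro y hy
        exact (phi'_hasDeriv (lt_of_lt_of_le (lt_of_lt_of_le hs hsu) hy.1)).continuousAt.continuousWithinAt
      · intro y hy
        rw [interior_Icc] at hy
        exact (phi'_hasDeriv (lt_trans (lt_of_lt_of_le hs hsu) hy.1)).hasDerivWithinAt
      · intro y hy
        rw [interior_Icc] at hy
        exact mul_nonneg (by positivity)
          (rho_SC hw0 (hwmem.2.trans hy.1.le) hy.2.le hw)
    have h2 := hmono (left_mem_Icc.mpr hu) (right_mem_Icc.mpr hu) hu
    rw [phi'_one] at h2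
    exact h2

lemma phi_nonneg {t : ℝ} (ht : 0 < t) (ht1 : t ≤ 1) : 0 ≤ phi t := by
  by_cases H : ∀ s ∈ Ioc (0:ℝ) t, 0 ≤ phi' s
  · have hm : MonotoneOn phi (Icc 0 t) := by
      apply monotoneOn_of_hasDerivWithinAt_nonneg (convex_Icc _ _) (f' := phi')
        (fun y _ => (phi_hasDeriv y).continuousAt.continuousWithinAt)
        (fun y _ => (phi_hasDeriv y).hasDerivWithinAt)
      intro y hy
      rw [interior_Icc] at hy
      exact H y ⟨hy.1, hy.2.le⟩
    have h2 := hm (left_mem_Icc.mpr ht.le) (right_mem_Icc.mpr ht.le) ht.le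
    rw [phi_zero] at h2
    exact h2
  · push_neg at H
    obtain ⟨s, hsmem, hs⟩ := H
    have hanti : AntitoneOn phi (Icc t 1) := by
      apply antitoneOn_of_hasDerivWithinAt_nonpos (convex_Icc _ _) (f' := phi')
        (fun y _ => (phi_hasDeriv y).continuousAt.continuousWithinAt)
        (fun y _ => (phi_hasDeriv y).hasDerivWithinAt)
      intro y hy
      rw [interior_Icc] at hy
      exact phi'_SC hsmem.1 (hsmem.2.trans hy.1.le) hy.2.le hs
    have h2 := hanti (left_mem_Icc.mpr ht1) (right_mem_Icc.mpr ht1) ht1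
    rw [phi_one] at h2
    exact h2

lemma upper_main {x : ℝ} (hx : 0 < x) (hx2 : x ≤ π/2) :
    Real.sin x / x ≤ 2/π + 2/(PP*π) * (1 - (2*x/π) ^ PP) := by
  have hπ := pi_pos
  set t := 2*x/π with htdef
  have ht : 0 < t := by positivity
  have ht1 : t ≤ 1 := by
    rw [htdef, div_le_one hπ]; linarith
  have harg : π/2*t = x := by
    rw [htdef]; field_simp
  have hφ := phi_nonneg ht ht1
  unfold phi at hφ
  rw [harg] at hφ
  have hsplit : t ^ (PP+1) = t ^ PP * t := by rw [Real.rpow_add ht, Real.rpow_one]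
  rw [hsplit] at hφ
  rw [div_le_iff₀ hx]
  have hne : PP ≠ 0 := ne_of_gt hP_pos
  have hid : (2/π + 2/(PP*π) * (1 - t ^ PP)) * x = t + t/PP - t ^ PP * t/PP := by
    rw [← harg]
    field_simp
    ring
  linarith [hφ, hid.le, hid.ge]
theorem double_jordan (q₁ q₂ : ℝ) (h₁ : q₁ ∈ Set.Ioc 0 (π^2/4 - 1))
    (h₂ : q₂ ∈ Set.Ioc 0 (2/(π-2))) (x : ℝ) (hx : x ∈ Set.Ioc 0 (π/2)) :
    2/π + (π - 2)/π ^ (q₂+1) * (π ^ q₂ - (2*x) ^ q₂) ≤ Real.sin x / x ∧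
    Real.sin x / x ≤ 2/π + 2/(q₁*π ^ (q₁+1)) * (π ^ q₁ - (2*x) ^ q₁) := by
  obtain ⟨hx0, hx2⟩ := hx
  have hπ := pi_pos
  set t := 2*x/π with htdef
  have ht : 0 < t := by positivity
  have ht1 : t ≤ 1 := by rw [htdef, div_le_one hπ]; linarith
  have h2x : (2*x) = t*π := by rw [htdef]; field_simp
  constructor
  · -- lower bound
    have hq2K : q₂ ≤ KK := by unfold KK; exact h₂.2
    have hrw : 2/π + (π - 2)/π ^ (q₂+1) * (π ^ q₂ - (2*x) ^ q₂)
        = 2/π + (π-2)/π * (1 - t ^ q₂) := by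
      rw [h2x, Real.mul_rpow ht.le hπ.le, Real.rpow_add hπ, Real.rpow_one]
      have hπq : (0:ℝ) < π ^ q₂ := Real.rpow_pos_of_pos hπ _
      field_simp
    rw [hrw]
    have hKq : t ^ KK ≤ t ^ q₂ := Real.rpow_le_rpow_of_exponent_ge ht ht1 hq2K
    have hcoef : (0:ℝ) ≤ (π-2)/π := by
      have := pi2pos
      positivity
    calc 2/π + (π-2)/π * (1 - t ^ q₂)
        ≤ 2/π + (π-2)/π * (1 - t ^ KK) := by
          have := mul_le_mul_of_nonneg_left (by linarith : (1:ℝ) - t ^ q₂ ≤ 1 - t ^ KK) hcoef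
          linarith
      _ = 1 - (π-2)/π * t ^ KK := by field_simp; ring
      _ ≤ Real.sin x / x := lower_main hx0 hx2
  · -- upper bound
    have hq1 : 0 < q₁ := h₁.1
    have hq1P : q₁ ≤ PP := by unfold PP; exact h₁.2
    have hrw : 2/π + 2/(q₁*π ^ (q₁+1)) * (π ^ q₁ - (2*x) ^ q₁)
        = 2/π + 2/(q₁*π) * (1 - t ^ q₁) := by
      rw [h2x, Real.mul_rpow ht.le hπ.le, Real.rpow_add hπ, Real.rpow_one]
      have hπq : (0:ℝ) < π ^ q₁ := Real.rpow_pos_of_pos hπ _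
      field_simp
    rw [hrw]
    have hgm := Real.geom_mean_le_arith_mean2_weighted
      (w₁ := q₁/PP) (w₂ := 1 - q₁/PP) (p₁ := t ^ PP) (p₂ := 1)
      (div_nonneg hq1.le hP_pos.le) (by
        have : q₁/PP ≤ 1 := by
          rw [div_le_one hP_pos]; exact hq1P
        linarith)
      (Real.rpow_pos_of_pos ht PP).le (by norm_num)
      (by ring)
    rw [Real.one_rpow, mul_one] at hgm
    have hpow : (t ^ PP) ^ (q₁/PP) = t ^ q₁ := by
      rw [← Real.rpow_mul ht.le]
      congr 1
      field_simp
      exact div_self (ne_of_gt hP_pos)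
    rw [hpow] at hgm
    have key : (q₁/PP) * (1 - t ^ PP) ≤ 1 - t ^ q₁ := by linarith
    have hstep : 2/(PP*π) * (1 - t ^ PP) ≤ 2/(q₁*π) * (1 - t ^ q₁) := by
      have h5 : 2/(PP*π) * (1 - t ^ PP) = 2/(q₁*π) * ((q₁/PP) * (1 - t ^ PP)) := by
        field_simp [hq1.ne', hP_pos.ne']
      rw [h5]
      exact mul_le_mul_of_nonneg_left key (by positivity)
    calc Real.sin x / x ≤ 2/π + 2/(PP*π) * (1 - t ^ PP) := upper_main hx0 hx2
      _ ≤ 2/π + 2/(q₁*π) * (1 - t ^ q₁) := by linarith
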